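/- arXiv:0903.0277 — 4 statements merged into one kernel-verified Lean document; each statement's English description precedes it below -/
import Mathlib

section
/- For all n ≥ 0, F(n+4; n, 0) = (1/12)·(n+1)·(n³ + 15n² + 74n + 132), where F counts Gessel walks of length n+4 from the origin to (n, 0). -/
open Finset

/-- The four Gessel steps: W, E, NE, SW. -/
def gstep : Fin 4 → ℤ × ℤ
  | 0 => (-1, 0)
  | 1 => (1, 0)
  | 2 => (1, 1)
  | 3 => (-1, -1)

/-- Position of the walk `w` after `j` steps. -/
def wpos (m : ℕ) (w : Fin m → Fin 4) (j : ℕ) : ℤ × ℤ :=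
  ∑ i : Fin m, if (i : ℕ) < j then gstep (w i) else 0

/-- `gesselF m n1 n2` : number of Gessel walks of length `m` from the origin to `(n1, n2)`
staying in the first quadrant. -/
noncomputable def gesselF (m : ℕ) (n1 n2 : ℤ) : ℕ :=
  Nat.card {w : Fin m → Fin 4 //
    (∀ j, 1 ≤ j → j ≤ m → 0 ≤ (wpos m w j).1 ∧ 0 ≤ (wpos m w j).2) ∧
    wpos m w m = (n1, n2)}

/-- Partial sum of a `±1` sequence. -/
def pSum (m : ℕ) (f : Fin m → ℤ) (j : ℕ) : ℤ :=
  ∑ i : Fin m, if (i : ℕ) < j then f i else 0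

lemma wpos_eq_sum (m : ℕ) (w : Fin m → Fin 4) {j : ℕ} (h : m ≤ j) :
    wpos m w j = ∑ i : Fin m, gstep (w i) := by
  unfold wpos
  refine Finset.sum_congr rfl fun i _ => ?_
  rw [if_pos (lt_of_lt_of_le i.isLt h)]

lemma wpos_snoc (m : ℕ) (v : Fin m → Fin 4) (s : Fin 4) (j : ℕ) :
    wpos (m+1) (Fin.snoc v s) j = wpos m v j + (if m < j then gstep s else 0) := by
  unfold wpos
  rw [Fin.sum_univ_castSucc]
  simp [Fin.snoc_castSucc, Fin.snoc_last, Fin.coe_castSucc, Fin.val_last]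

lemma gstep_fst_le (s : Fin 4) : (gstep s).1 ≤ 1 := by fin_cases s <;> simp [gstep]

lemma gstep_snd_le (s : Fin 4) : (gstep s).2 ≤ 1 := by fin_cases s <;> simp [gstep]

lemma wpos_fst_le (m : ℕ) (w : Fin m → Fin 4) : (wpos m w m).1 ≤ m := by
  rw [wpos_eq_sum m w le_rfl, Prod.fst_sum]
  calc ∑ i : Fin m, (gstep (w i)).1 ≤ ∑ _i : Fin m, (1:ℤ) :=
        Finset.sum_le_sum (fun i _ => gstep_fst_le _)
    _ = m := by simp

lemma wpos_snd_le (m : ℕ) (w : Fin m → Fin 4) : (wpos m w m).2 ≤ m := by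
  rw [wpos_eq_sum m w le_rfl, Prod.snd_sum]
  calc ∑ i : Fin m, (gstep (w i)).2 ≤ ∑ _i : Fin m, (1:ℤ) :=
        Finset.sum_le_sum (fun i _ => gstep_snd_le _)
    _ = m := by simp

lemma gesselF_zero_of_neg {m : ℕ} {n1 n2 : ℤ} (h : n1 < 0 ∨ n2 < 0) :
    gesselF m n1 n2 = 0 := by
  unfold gesselF
  rw [Nat.card_eq_zero]
  left
  constructor
  rintro ⟨w, hv, he⟩
  cases m with
  | zero =>
    simp only [wpos, Finset.univ_eq_empty, Finset.sum_empty] at he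
    rw [Prod.ext_iff] at he
    simp at he
    omega
  | succ m =>
    have h1 := hv (m+1) (by omega) le_rfl
    rw [he] at h1
    simp at h1
    omega

lemma gesselF_zero_of_big_fst {m : ℕ} {n1 n2 : ℤ} (h : (m:ℤ) < n1) :
    gesselF m n1 n2 = 0 := by
  unfold gesselF
  rw [Nat.card_eq_zero]
  left
  constructor
  rintro ⟨w, hv, he⟩
  have := wpos_fst_le m w
  rw [he] at this
  simp at this
  omega

lemma gesselF_zero_of_big_snd {m : ℕ} {n1 n2 : ℤ} (h : (m:ℤ) < n2) :
    gesselF m n1 n2 = 0 := by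
  unfold gesselF
  rw [Nat.card_eq_zero]
  left
  constructor
  rintro ⟨w, hv, he⟩
  have := wpos_snd_le m w
  rw [he] at this
  simp at this
  omega

lemma gesselF_zero_zero : gesselF 0 0 0 = 1 := by
  unfold gesselF
  haveI : Nonempty {w : Fin 0 → Fin 4 //
      (∀ j, 1 ≤ j → j ≤ 0 → 0 ≤ (wpos 0 w j).1 ∧ 0 ≤ (wpos 0 w j).2) ∧
      wpos 0 w 0 = (0, 0)} := by
    refine ⟨⟨fun i => i.elim0, fun j h1 h2 => absurd (h1.trans h2) (by omega), ?_⟩⟩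
    simp [wpos, Prod.ext_iff]
  haveI : Subsingleton {w : Fin 0 → Fin 4 //
      (∀ j, 1 ≤ j → j ≤ 0 → 0 ≤ (wpos 0 w j).1 ∧ 0 ≤ (wpos 0 w j).2) ∧
      wpos 0 w 0 = (0, 0)} := by
    constructor
    rintro ⟨a, _⟩ ⟨b, _⟩
    ext i
    exact i.elim0
  exact Nat.card_unique


lemma nat_card_sigma {ι : Type} [Fintype ι] (β : ι → Type) [∀ i, Finite (β i)] :
    Nat.card (Σ i, β i) = ∑ i, Nat.card (β i) := by
  letI : ∀ i, Fintype (β i) := fun i => Fintype.ofFinite _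
  rw [Nat.card_eq_fintype_card, Fintype.card_sigma]
  exact Finset.sum_congr rfl fun i _ => (Nat.card_eq_fintype_card).symm

set_option maxHeartbeats 1600000 in
lemma gesselF_succ (m : ℕ) (n1 n2 : ℤ) (h1 : 0 ≤ n1) (h2 : 0 ≤ n2) :
    gesselF (m+1) n1 n2 =
      gesselF m (n1+1) n2 + gesselF m (n1-1) n2 + gesselF m (n1-1) (n2-1) +
        gesselF m (n1+1) (n2+1) := by
  classical
  have key : ∀ (s : Fin 4) (v : Fin m → Fin 4),
      ((∀ j, 1 ≤ j → j ≤ m+1 → 0 ≤ (wpos (m+1) (Fin.snoc v s) j).1 ∧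
          0 ≤ (wpos (m+1) (Fin.snoc v s) j).2) ∧
        wpos (m+1) (Fin.snoc v s) (m+1) = (n1, n2)) ↔
      ((∀ j, 1 ≤ j → j ≤ m → 0 ≤ (wpos m v j).1 ∧ 0 ≤ (wpos m v j).2) ∧
        wpos m v m = (n1 - (gstep s).1, n2 - (gstep s).2)) := by
    intro s v
    have hsn : ∀ j, j ≤ m → wpos (m+1) (Fin.snoc v s) j = wpos m v j := by
      intro j hj
      rw [wpos_snoc, if_neg (by omega), add_zero]
    have htop : wpos (m+1) (Fin.snoc v s) (m+1) = wpos m v m + gstep s := by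
      rw [wpos_snoc, if_pos (by omega), wpos_eq_sum m v (by omega),
        wpos_eq_sum m v le_rfl]
    constructor
    · rintro ⟨hv, he⟩
      rw [htop] at he
      refine ⟨fun j hj1 hj2 => by rw [← hsn j hj2]; exact hv j hj1 (by omega), ?_⟩
      rw [Prod.ext_iff] at he ⊢
      simp only [Prod.fst_add, Prod.snd_add] at he ⊢
      omega
    · rintro ⟨hv, he⟩
      have hend : wpos (m+1) (Fin.snoc v s) (m+1) = (n1, n2) := by
        rw [htop, he]
        rw [Prod.ext_iff]
        simp only [Prod.fst_add, Prod.snd_add]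
        constructor <;> ring
      refine ⟨fun j hj1 hj2 => ?_, hend⟩
      rcases Nat.lt_or_ge j (m+1) with hj | hj
      · rw [hsn j (by omega)]
        exact hv j hj1 (by omega)
      · have : j = m+1 := by omega
        rw [this, hend]
        exact ⟨h1, h2⟩
  have e1 : {w : Fin (m+1) → Fin 4 //
      (∀ j, 1 ≤ j → j ≤ m+1 → 0 ≤ (wpos (m+1) w j).1 ∧ 0 ≤ (wpos (m+1) w j).2) ∧
        wpos (m+1) w (m+1) = (n1, n2)} ≃
      Σ s : Fin 4, {v : Fin m → Fin 4 //
        (∀ j, 1 ≤ j → j ≤ m → 0 ≤ (wpos m v j).1 ∧ 0 ≤ (wpos m v j).2) ∧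
          wpos m v m = (n1 - (gstep s).1, n2 - (gstep s).2)} := by
    have ea : {w : Fin (m+1) → Fin 4 //
        (∀ j, 1 ≤ j → j ≤ m+1 → 0 ≤ (wpos (m+1) w j).1 ∧ 0 ≤ (wpos (m+1) w j).2) ∧
          wpos (m+1) w (m+1) = (n1, n2)} ≃
        {p : Fin 4 × (Fin m → Fin 4) //
          (∀ j, 1 ≤ j → j ≤ m+1 → 0 ≤ (wpos (m+1) (Fin.snoc p.2 p.1) j).1 ∧
            0 ≤ (wpos (m+1) (Fin.snoc p.2 p.1) j).2) ∧
          wpos (m+1) (Fin.snoc p.2 p.1) (m+1) = (n1, n2)} := {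
      toFun := fun w => ⟨(w.1 (Fin.last m), Fin.init w.1), by
        rw [Fin.snoc_init_self]; exact w.2⟩
      invFun := fun p => ⟨Fin.snoc p.1.2 p.1.1, p.2⟩
      left_inv := fun w => Subtype.ext (Fin.snoc_init_self w.1)
      right_inv := fun p => by
        apply Subtype.ext
        simp only [Fin.snoc_last, Fin.init_snoc] }
    have eb : {p : Fin 4 × (Fin m → Fin 4) //
          (∀ j, 1 ≤ j → j ≤ m+1 → 0 ≤ (wpos (m+1) (Fin.snoc p.2 p.1) j).1 ∧
            0 ≤ (wpos (m+1) (Fin.snoc p.2 p.1) j).2) ∧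
          wpos (m+1) (Fin.snoc p.2 p.1) (m+1) = (n1, n2)} ≃
        {p : Fin 4 × (Fin m → Fin 4) //
          (∀ j, 1 ≤ j → j ≤ m → 0 ≤ (wpos m p.2 j).1 ∧ 0 ≤ (wpos m p.2 j).2) ∧
            wpos m p.2 m = (n1 - (gstep p.1).1, n2 - (gstep p.1).2)} :=
      Equiv.subtypeEquivRight (fun p => key p.1 p.2)
    exact (ea.trans eb).trans (Equiv.subtypeProdEquivSigmaSubtype
      (fun (s : Fin 4) (v : Fin m → Fin 4) =>
        (∀ j, 1 ≤ j → j ≤ m → 0 ≤ (wpos m v j).1 ∧ 0 ≤ (wpos m v j).2) ∧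
          wpos m v m = (n1 - (gstep s).1, n2 - (gstep s).2)))
  have hc : gesselF (m+1) n1 n2 = ∑ s : Fin 4,
      gesselF m (n1 - (gstep s).1) (n2 - (gstep s).2) := by
    unfold gesselF
    rw [Nat.card_congr e1, nat_card_sigma]
  rw [hc, Fin.sum_univ_four]
  have c0 : gstep 0 = ((-1 : ℤ), (0 : ℤ)) := rfl
  have c1 : gstep 1 = ((1 : ℤ), (0 : ℤ)) := rfl
  have c2 : gstep 2 = ((1 : ℤ), (1 : ℤ)) := rfl
  have c3 : gstep 3 = ((-1 : ℤ), (-1 : ℤ)) := rfl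
  rw [c0, c1, c2, c3]
  norm_num [sub_neg_eq_add]

lemma gesselF_L0 (m : ℕ) : gesselF m (m:ℤ) 0 = 1 := by
  induction m with
  | zero => simpa using gesselF_zero_zero
  | succ m ih =>
    rw [show ((m+1:ℕ):ℤ) = (m:ℤ)+1 by push_cast; ring]
    rw [gesselF_succ m ((m:ℤ)+1) 0 (by positivity) le_rfl]
    have z1 : gesselF m ((m:ℤ)+1+1) 0 = 0 := gesselF_zero_of_big_fst (by omega)
    have z2 : gesselF m ((m:ℤ)+1-1) 0 = 1 := by
      rw [show (m:ℤ)+1-1 = (m:ℤ) by ring]; exact ih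
    have z3 : gesselF m ((m:ℤ)+1-1) (0-1) = 0 := gesselF_zero_of_neg (Or.inr (by norm_num))
    have z4 : gesselF m ((m:ℤ)+1+1) (0+1) = 0 := gesselF_zero_of_big_fst (by omega)
    rw [z1, z2, z3, z4]

lemma gesselF_L1 (m : ℕ) : gesselF m (m:ℤ) 1 = m := by
  induction m with
  | zero =>
    have : gesselF 0 ((0:ℕ):ℤ) 1 = 0 := gesselF_zero_of_big_snd (by norm_num)
    simpa using this
  | succ m ih =>
    rw [show ((m+1:ℕ):ℤ) = (m:ℤ)+1 by push_cast; ring]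
    rw [gesselF_succ m ((m:ℤ)+1) 1 (by positivity) (by norm_num)]
    have z1 : gesselF m ((m:ℤ)+1+1) 1 = 0 := gesselF_zero_of_big_fst (by omega)
    have z2 : gesselF m ((m:ℤ)+1-1) 1 = m := by
      rw [show (m:ℤ)+1-1 = (m:ℤ) by ring]; exact ih
    have z3 : gesselF m ((m:ℤ)+1-1) (1-1) = 1 := by
      rw [show (m:ℤ)+1-1 = (m:ℤ) by ring, show (1:ℤ)-1 = 0 by ring]; exact gesselF_L0 m
    have z4 : gesselF m ((m:ℤ)+1+1) (1+1) = 0 := gesselF_zero_of_big_fst (by omega)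
    rw [z1, z2, z3, z4]
    omega

lemma gesselF_L2 (m : ℕ) : 2 * gesselF (m+1) ((m:ℤ)+1) 2 = (m+1) * m := by
  induction m with
  | zero =>
    have : gesselF 1 (((0:ℕ):ℤ)+1) 2 = 0 := gesselF_zero_of_big_snd (by norm_num)
    simp only [this]
  | succ m ih =>
    rw [show ((m+1:ℕ):ℤ)+1 = (m:ℤ)+1+1 by push_cast; ring]
    rw [gesselF_succ (m+1) ((m:ℤ)+1+1) 2 (by positivity) (by norm_num)]
    have z1 : gesselF (m+1) ((m:ℤ)+1+1+1) 2 = 0 := gesselF_zero_of_big_fst (by push_cast; omega)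
    have z2 : 2 * gesselF (m+1) ((m:ℤ)+1+1-1) 2 = (m+1) * m := by
      rw [show (m:ℤ)+1+1-1 = (m:ℤ)+1 by ring]; exact ih
    have z3 : gesselF (m+1) ((m:ℤ)+1+1-1) (2-1) = m+1 := by
      rw [show (m:ℤ)+1+1-1 = ((m+1:ℕ):ℤ) by push_cast; ring, show (2:ℤ)-1 = 1 by ring]
      exact gesselF_L1 (m+1)
    have z4 : gesselF (m+1) ((m:ℤ)+1+1+1) (2+1) = 0 := gesselF_zero_of_big_fst (by push_cast; omega)
    rw [z1, z4]
    calc 2 * (0 + gesselF (m+1) ((m:ℤ)+1+1-1) 2 + gesselF (m+1) ((m:ℤ)+1+1-1) (2-1) + 0)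
        = 2 * gesselF (m+1) ((m:ℤ)+1+1-1) 2 + 2 * gesselF (m+1) ((m:ℤ)+1+1-1) (2-1) := by
          ring
      _ = (m+1) * m + 2 * (m+1) := by rw [z2, z3]
      _ = (m+1+1) * (m+1) := by ring

lemma gesselF_L3 (n : ℕ) : 2 * gesselF (n+2) (n:ℤ) 0 = (n+1) * (n+4) := by
  induction n with
  | zero =>
    have e : gesselF 2 ((0:ℕ):ℤ) 0 = 2 := by
      rw [show ((0:ℕ):ℤ) = (0:ℤ) by norm_num]
      rw [show (2:ℕ) = 1+1 by norm_num]
      rw [gesselF_succ 1 0 0 le_rfl le_rfl]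
      have z1 : gesselF 1 ((0:ℤ)+1) 0 = 1 := by
        rw [show (0:ℤ)+1 = ((1:ℕ):ℤ) by norm_num]; exact gesselF_L0 1
      have z2 : gesselF 1 ((0:ℤ)-1) 0 = 0 := gesselF_zero_of_neg (Or.inl (by norm_num))
      have z3 : gesselF 1 ((0:ℤ)-1) (0-1) = 0 := gesselF_zero_of_neg (Or.inl (by norm_num))
      have z4 : gesselF 1 ((0:ℤ)+1) (0+1) = 1 := by
        rw [show (0:ℤ)+1 = ((1:ℕ):ℤ) by norm_num]; exact gesselF_L1 1
      rw [z1, z2, z3, z4]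
    rw [e]
  | succ n ih =>
    rw [show ((n+1:ℕ):ℤ) = (n:ℤ)+1 by push_cast; ring]
    rw [show n+1+2 = (n+2)+1 by omega]
    rw [gesselF_succ (n+2) ((n:ℤ)+1) 0 (by positivity) le_rfl]
    have z1 : gesselF (n+2) ((n:ℤ)+1+1) 0 = 1 := by
      rw [show (n:ℤ)+1+1 = ((n+2:ℕ):ℤ) by push_cast; ring]; exact gesselF_L0 (n+2)
    have z2 : 2 * gesselF (n+2) ((n:ℤ)+1-1) 0 = (n+1) * (n+4) := by
      rw [show (n:ℤ)+1-1 = (n:ℤ) by ring]; exact ih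
    have z3 : gesselF (n+2) ((n:ℤ)+1-1) (0-1) = 0 := gesselF_zero_of_neg (Or.inr (by norm_num))
    have z4 : gesselF (n+2) ((n:ℤ)+1+1) (0+1) = n+2 := by
      rw [show (n:ℤ)+1+1 = ((n+2:ℕ):ℤ) by push_cast; ring, show (0:ℤ)+1 = 1 by ring]
      exact gesselF_L1 (n+2)
    rw [z1, z3, z4]
    calc 2 * (1 + gesselF (n+2) ((n:ℤ)+1-1) 0 + 0 + (n+2))
        = 2 * gesselF (n+2) ((n:ℤ)+1-1) 0 + 2 + 2*(n+2) := by ring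
      _ = (n+1) * (n+4) + 2 + 2*(n+2) := by rw [z2]
      _ = (n+1+1) * (n+1+4) := by ring

lemma gesselF_L4 (n : ℕ) :
    6 * gesselF (n+2) (n:ℤ) 1 = 6*(n+1)^2 + 2*(n+2)*(n+1)*n := by
  induction n with
  | zero =>
    have e : gesselF 2 ((0:ℕ):ℤ) 1 = 1 := by
      rw [show ((0:ℕ):ℤ) = (0:ℤ) by norm_num]
      rw [show (2:ℕ) = 1+1 by norm_num]
      rw [gesselF_succ 1 0 1 le_rfl (by norm_num)]
      have z1 : gesselF 1 ((0:ℤ)+1) 1 = 1 := by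
        rw [show (0:ℤ)+1 = ((1:ℕ):ℤ) by norm_num]; exact gesselF_L1 1
      have z2 : gesselF 1 ((0:ℤ)-1) 1 = 0 := gesselF_zero_of_neg (Or.inl (by norm_num))
      have z3 : gesselF 1 ((0:ℤ)-1) (1-1) = 0 := gesselF_zero_of_neg (Or.inl (by norm_num))
      have z4 : gesselF 1 ((0:ℤ)+1) (1+1) = 0 := gesselF_zero_of_big_snd (by norm_num)
      rw [z1, z2, z3, z4]
    rw [e]
    norm_num
  | succ n ih =>
    rw [show ((n+1:ℕ):ℤ) = (n:ℤ)+1 by push_cast; ring]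
    rw [show n+1+2 = (n+2)+1 by omega]
    rw [gesselF_succ (n+2) ((n:ℤ)+1) 1 (by positivity) (by norm_num)]
    have z1 : gesselF (n+2) ((n:ℤ)+1+1) 1 = n+2 := by
      rw [show (n:ℤ)+1+1 = ((n+2:ℕ):ℤ) by push_cast; ring]; exact gesselF_L1 (n+2)
    have z2 : 6 * gesselF (n+2) ((n:ℤ)+1-1) 1 = 6*(n+1)^2 + 2*(n+2)*(n+1)*n := by
      rw [show (n:ℤ)+1-1 = (n:ℤ) by ring]; exact ih
    have z3 : 2 * gesselF (n+2) ((n:ℤ)+1-1) (1-1) = (n+1) * (n+4) := by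
      rw [show (n:ℤ)+1-1 = (n:ℤ) by ring, show (1:ℤ)-1 = 0 by ring]; exact gesselF_L3 n
    have z4 : 2 * gesselF (n+2) ((n:ℤ)+1+1) (1+1) = (n+2) * (n+1) := by
      rw [show (n:ℤ)+1+1 = ((n+1:ℕ):ℤ)+1 by push_cast; ring, show (1:ℤ)+1 = 2 by ring]
      exact gesselF_L2 (n+1)
    rw [z1]
    calc 6 * ((n+2) + gesselF (n+2) ((n:ℤ)+1-1) 1 + gesselF (n+2) ((n:ℤ)+1-1) (1-1)
          + gesselF (n+2) ((n:ℤ)+1+1) (1+1))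
        = 6*(n+2) + 6 * gesselF (n+2) ((n:ℤ)+1-1) 1
          + 3 * (2 * gesselF (n+2) ((n:ℤ)+1-1) (1-1))
          + 3 * (2 * gesselF (n+2) ((n:ℤ)+1+1) (1+1)) := by ring
      _ = 6*(n+2) + (6*(n+1)^2 + 2*(n+2)*(n+1)*n) + 3*((n+1)*(n+4)) + 3*((n+2)*(n+1)) := by
          rw [z2, z3, z4]
      _ = 6*(n+1+1)^2 + 2*(n+1+2)*(n+1+1)*(n+1) := by ring

theorem gessel_C4_k2 (n : ℕ) :
    12 * gesselF (n + 4) (n : ℤ) 0 = (n + 1) * (n ^ 3 + 15 * n ^ 2 + 74 * n + 132) := by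
  induction n with
  | zero =>
    rw [show ((0:ℕ):ℤ) = (0:ℤ) by norm_num]
    rw [show (0:ℕ)+4 = 3+1 by norm_num]
    rw [gesselF_succ 3 0 0 le_rfl le_rfl]
    have z1 : 2 * gesselF 3 ((0:ℤ)+1) 0 = 10 := by
      have h := gesselF_L3 1
      norm_num at h ⊢
      exact h
    have z2 : gesselF 3 ((0:ℤ)-1) 0 = 0 := gesselF_zero_of_neg (Or.inl (by norm_num))
    have z3 : gesselF 3 ((0:ℤ)-1) (0-1) = 0 := gesselF_zero_of_neg (Or.inl (by norm_num))
    have z4 : 6 * gesselF 3 ((0:ℤ)+1) (0+1) = 36 := by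
      have h := gesselF_L4 1
      norm_num at h ⊢
      exact h
    rw [z2, z3]
    calc 12 * (gesselF 3 ((0:ℤ)+1) 0 + 0 + 0 + gesselF 3 ((0:ℤ)+1) (0+1))
        = 6 * (2 * gesselF 3 ((0:ℤ)+1) 0) + 2 * (6 * gesselF 3 ((0:ℤ)+1) (0+1)) := by omega
      _ = 6 * 10 + 2 * 36 := by rw [z1, z4]
      _ = (0+1) * (0^3 + 15*0^2 + 74*0 + 132) := by norm_num
  | succ n ih =>
    rw [show ((n+1:ℕ):ℤ) = (n:ℤ)+1 by push_cast; ring]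
    rw [show n+1+4 = (n+4)+1 by omega]
    rw [gesselF_succ (n+4) ((n:ℤ)+1) 0 (by positivity) le_rfl]
    have z1 : 2 * gesselF (n+4) ((n:ℤ)+1+1) 0 = (n+3) * (n+6) := by
      rw [show (n:ℤ)+1+1 = ((n+2:ℕ):ℤ) by push_cast; ring, show n+4 = (n+2)+2 by omega]
      rw [gesselF_L3 (n+2)]
    have z2 : 12 * gesselF (n+4) ((n:ℤ)+1-1) 0
        = (n+1) * (n^3 + 15*n^2 + 74*n + 132) := by
      rw [show (n:ℤ)+1-1 = (n:ℤ) by ring]; exact ih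
    have z3 : gesselF (n+4) ((n:ℤ)+1-1) (0-1) = 0 :=
      gesselF_zero_of_neg (Or.inr (by norm_num))
    have z4 : 6 * gesselF (n+4) ((n:ℤ)+1+1) (0+1)
        = 6*(n+3)^2 + 2*(n+4)*(n+3)*(n+2) := by
      rw [show (n:ℤ)+1+1 = ((n+2:ℕ):ℤ) by push_cast; ring, show (0:ℤ)+1 = 1 by ring,
        show n+4 = (n+2)+2 by omega]
      rw [gesselF_L4 (n+2)]
    rw [z3]
    calc 12 * (gesselF (n+4) ((n:ℤ)+1+1) 0 + gesselF (n+4) ((n:ℤ)+1-1) 0 + 0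
          + gesselF (n+4) ((n:ℤ)+1+1) (0+1))
        = 6 * (2 * gesselF (n+4) ((n:ℤ)+1+1) 0) + 12 * gesselF (n+4) ((n:ℤ)+1-1) 0
          + 2 * (6 * gesselF (n+4) ((n:ℤ)+1+1) (0+1)) := by omega
      _ = 6 * ((n+3) * (n+6)) + (n+1) * (n^3 + 15*n^2 + 74*n + 132)
          + 2 * (6*(n+3)^2 + 2*(n+4)*(n+3)*(n+2)) := by rw [z1, z2, z4]
      _ = (n+1+1) * ((n+1)^3 + 15*(n+1)^2 + 74*(n+1) + 132) := by ring
end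

section
/- For all n ≥ 0 and k ≥ 1, F(n+2k; n, 0) = Σ_{s=1}^{k} Σ_{t=0}^{s} ((s-t+1)/(n+2)) · C(n+2, s+1) · C(n+2, t) · F(2k-1; 2s-1, s-t). -/
open Finset

/-! ### Auxiliary development -/

lemma wpos_zero (m : ℕ) (w : Fin m → Fin 4) : wpos m w 0 = 0 := by
  simp [wpos]

lemma wpos_tail (m : ℕ) (w : Fin (m+1) → Fin 4) (j : ℕ) :
    wpos (m+1) w (j+1) = gstep (w 0) + wpos m (fun i => w i.succ) j := by
  rw [wpos, Fin.sum_univ_succ]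
  simp [wpos, Nat.succ_lt_succ_iff]

lemma wpos_step (m : ℕ) (w : Fin m → Fin 4) (j : ℕ) (h : j < m) :
    wpos m w (j+1) = wpos m w j + gstep (w ⟨j, h⟩) := by
  rw [wpos, wpos]
  have : ∀ i : Fin m, (if (i : ℕ) < j + 1 then gstep (w i) else 0)
      = (if (i : ℕ) < j then gstep (w i) else 0) + (if i = ⟨j, h⟩ then gstep (w i) else 0) := by
    intro i
    rcases lt_trichotomy (i : ℕ) j with h1 | h1 | h1
    · simp [h1, Nat.lt_succ_of_lt h1, Fin.ext_iff, Nat.ne_of_lt h1]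
    · simp [h1, Fin.ext_iff, h1 ▸ Nat.lt_succ_self j]
    · have h2 : ¬ (i : ℕ) < j := Nat.not_lt.2 (le_of_lt h1)
      have h3 : ¬ (i : ℕ) < j + 1 := Nat.not_lt.2 (Nat.succ_le_of_lt h1)
      simp [h2, h3, Fin.ext_iff, (Nat.ne_of_lt h1).symm]
  rw [Finset.sum_congr rfl (fun i _ => this i), Finset.sum_add_distrib]
  congr 1
  rw [Finset.sum_ite_eq' Finset.univ (⟨j, h⟩ : Fin m)]
  simp

noncomputable def NC (C : ℤ × ℤ → Prop) (m : ℕ) (p q : ℤ × ℤ) : ℕ :=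
  Nat.card {w : Fin m → Fin 4 //
    (∀ j, 1 ≤ j → j ≤ m → C (p + wpos m w j)) ∧ p + wpos m w m = q}

def quadP (r : ℤ × ℤ) : Prop := 0 ≤ r.1 ∧ 0 ≤ r.2
def halfP (r : ℤ × ℤ) : Prop := 0 ≤ r.2

open scoped Classical

lemma gesselF_eq_NC (m : ℕ) (a b : ℤ) :
    gesselF m a b = NC quadP m (0, 0) (a, b) := by
  apply Nat.card_congr
  apply Equiv.subtypeEquiv (Equiv.refl _)
  intro w
  simp [quadP, Prod.ext_iff]

lemma NC_zero (C : ℤ × ℤ → Prop) (p q : ℤ × ℤ) :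
    NC C 0 p q = if p = q then 1 else 0 := by
  rw [NC]
  split_ifs with h
  · rw [Nat.card_eq_one_iff_unique]
    constructor
    · constructor
      rintro ⟨w1, -⟩ ⟨w2, -⟩
      apply Subtype.ext
      funext i; exact absurd i.2 (Nat.not_lt_zero _)
    · exact ⟨⟨fun i => 0, fun j h1 h2 => absurd (h1.trans h2) (by norm_num), by
        simp [wpos_zero, h]⟩⟩
  · rw [Nat.card_eq_zero]
    left
    constructor
    rintro ⟨w, -, hw⟩
    rw [wpos_zero, add_zero] at hw
    exact h hw

lemma cond_iff (C : ℤ × ℤ → Prop) (m : ℕ) (p q : ℤ × ℤ) (w : Fin (m+1) → Fin 4) :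
    ((∀ j, 1 ≤ j → j ≤ m+1 → C (p + wpos (m+1) w j)) ∧ p + wpos (m+1) w (m+1) = q)
    ↔ (C (p + gstep (w 0)) ∧
       ((∀ j, 1 ≤ j → j ≤ m → C ((p + gstep (w 0)) + wpos m (fun i => w i.succ) j)) ∧
        (p + gstep (w 0)) + wpos m (fun i => w i.succ) m = q)) := by
  have key : ∀ j, p + wpos (m+1) w (j+1) = (p + gstep (w 0)) + wpos m (fun i => w i.succ) j := by
    intro j; rw [wpos_tail, add_assoc]
  constructor
  · rintro ⟨h1, h2⟩
    refine ⟨?_, fun j hj1 hj2 => ?_, ?_⟩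
    · have k0 := key 0
      rw [wpos_zero, add_zero] at k0
      rw [← k0]
      exact h1 1 le_rfl (by omega)
    · have := h1 (j+1) (by omega) (by omega)
      rwa [key j] at this
    · rw [← key m]; exact h2
  · rintro ⟨h0, h1, h2⟩
    refine ⟨fun j hj1 hj2 => ?_, ?_⟩
    · obtain ⟨j', rfl⟩ : ∃ j', j = j' + 1 := ⟨j - 1, by omega⟩
      rcases Nat.eq_zero_or_pos j' with rfl | hj'
      · rw [key 0, wpos_zero, add_zero]; exact h0
      · rw [key j']; exact h1 j' hj' (by omega)
    · rw [key m]; exact h2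

lemma NC_succ (C : ℤ × ℤ → Prop) (m : ℕ) (p q : ℤ × ℤ) :
    NC C (m+1) p q =
      ∑ d : Fin 4, if C (p + gstep d) then NC C m (p + gstep d) q else 0 := by
  rw [NC]
  have e : {w : Fin (m+1) → Fin 4 //
      (∀ j, 1 ≤ j → j ≤ m+1 → C (p + wpos (m+1) w j)) ∧ p + wpos (m+1) w (m+1) = q} ≃
      (d : Fin 4) × {w' : Fin m → Fin 4 //
        C (p + gstep d) ∧
        ((∀ j, 1 ≤ j → j ≤ m → C ((p + gstep d) + wpos m w' j)) ∧
         (p + gstep d) + wpos m w' m = q)} := by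
    refine Equiv.trans
      (Equiv.subtypeEquiv (p := fun w => (∀ j, 1 ≤ j → j ≤ m+1 → C (p + wpos (m+1) w j)) ∧
          p + wpos (m+1) w (m+1) = q)
        (q := fun x : Fin 4 × (Fin m → Fin 4) => C (p + gstep x.1) ∧
          ((∀ j, 1 ≤ j → j ≤ m → C ((p + gstep x.1) + wpos m x.2 j)) ∧
           (p + gstep x.1) + wpos m x.2 m = q))
        (Fin.consEquiv (fun _ : Fin (m+1) => Fin 4)).symm ?_)
      (Equiv.subtypeProdEquivSigmaSubtype fun d w' => C (p + gstep d) ∧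
          ((∀ j, 1 ≤ j → j ≤ m → C ((p + gstep d) + wpos m w' j)) ∧
           (p + gstep d) + wpos m w' m = q))
    intro w
    exact cond_iff C m p q w
  rw [Nat.card_congr e]
  letI : ∀ d : Fin 4, Fintype {w' : Fin m → Fin 4 //
        C (p + gstep d) ∧
        ((∀ j, 1 ≤ j → j ≤ m → C ((p + gstep d) + wpos m w' j)) ∧
         (p + gstep d) + wpos m w' m = q)} := fun d => Fintype.ofFinite _
  rw [Nat.card_eq_fintype_card, Fintype.card_sigma]
  refine Finset.sum_congr rfl fun d _ => ?_
  split_ifs with hC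
  · rw [NC, Nat.card_eq_fintype_card]
    apply Fintype.card_congr
    exact Equiv.subtypeEquivRight (fun w' => by simp [hC])
  · rw [Fintype.card_eq_zero_iff]
    exact ⟨fun x => hC x.2.1⟩

lemma NC_split (C : ℤ × ℤ → Prop) (a : ℕ) :
    ∀ (b : ℕ) (p r : ℤ × ℤ) (S : Finset (ℤ × ℤ)),
    (∀ q, q ∉ S → NC C a p q = 0) →
    NC C (a+b) p r = ∑ q ∈ S, NC C a p q * NC C b q r := by
  induction a with
  | zero =>
    intro b p r S hS
    have hp : p ∈ S := by
      by_contra hp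
      have := hS p hp
      rw [NC_zero] at this
      simp at this
    rw [zero_add, Finset.sum_eq_single p]
    · rw [NC_zero]; simp
    · intro q hq hqp
      rw [NC_zero, if_neg (fun h => hqp h.symm), zero_mul]
    · intro h; exact absurd hp h
  | succ a ih =>
    intro b p r S hS
    have hrec : ∀ q, NC C (a+1) p q =
        ∑ d : Fin 4, if C (p + gstep d) then NC C a (p + gstep d) q else 0 :=
      fun q => NC_succ C a p q
    have hstep : (a + 1 + b) = (a + b) + 1 := by omega
    rw [hstep, NC_succ]
    have hsub : ∀ d : Fin 4, C (p + gstep d) →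
        ∀ q, q ∉ S → NC C a (p + gstep d) q = 0 := by
      intro d hd q hq
      have h0 := hS q hq
      rw [hrec q] at h0
      have := Finset.sum_eq_zero_iff.1 h0 d (Finset.mem_univ d)
      rwa [if_pos hd] at this
    calc ∑ d : Fin 4, (if C (p + gstep d) then NC C (a+b) (p + gstep d) r else 0)
        = ∑ d : Fin 4, (if C (p + gstep d) then
            ∑ q ∈ S, NC C a (p + gstep d) q * NC C b q r else 0) := by
          refine Finset.sum_congr rfl fun d _ => ?_
          split_ifs with hd
          · exact ih b (p + gstep d) r S (hsub d hd)
          · rfl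
      _ = ∑ d : Fin 4, ∑ q ∈ S,
            (if C (p + gstep d) then NC C a (p + gstep d) q else 0) * NC C b q r := by
          refine Finset.sum_congr rfl fun d _ => ?_
          split_ifs with hd
          · rfl
          · simp
      _ = ∑ q ∈ S, (∑ d : Fin 4, if C (p + gstep d) then NC C a (p + gstep d) q else 0)
            * NC C b q r := by
          rw [Finset.sum_comm]
          refine Finset.sum_congr rfl fun q _ => ?_
          rw [Finset.sum_mul]
      _ = ∑ q ∈ S, NC C (a+1) p q * NC C b q r := by
          refine Finset.sum_congr rfl fun q _ => ?_
          rw [← hrec q]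

noncomputable def bc (m : ℕ) (d : ℤ) : ℕ :=
  if Even ((m : ℤ) + d) ∧ 0 ≤ (m : ℤ) + d then m.choose (((m : ℤ) + d) / 2).toNat else 0

lemma bc_zero (d : ℤ) : bc 0 d = if d = 0 then 1 else 0 := by
  rw [bc]
  split_ifs with h1 h2 h2
  · subst h2; norm_num
  · obtain ⟨⟨c, hc⟩, h0⟩ := h1
    push_cast at hc h0
    exact Nat.choose_eq_zero_of_lt (by push_cast; omega)
  · exfalso; apply h1; subst h2; norm_num
  · rfl

lemma bc_succ (m : ℕ) (d : ℤ) : bc (m+1) d = bc m (d-1) + bc m (d+1) := by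
  rcases Int.even_or_odd ((m : ℤ) + 1 + d) with he | ho
  · obtain ⟨c, hc⟩ := he
    rcases lt_trichotomy ((m : ℤ) + 1 + d) 0 with hn | hz | hpos
    · rw [bc, bc, bc, if_neg, if_neg, if_neg]
      · rintro ⟨-, h⟩; omega
      · rintro ⟨-, h⟩; omega
      · rintro ⟨-, h⟩; push_cast at h; omega
    · rw [bc, bc, bc, if_pos ⟨⟨c, by push_cast; omega⟩, by push_cast; omega⟩, if_neg,
        if_pos ⟨⟨c, by omega⟩, by omega⟩]
      · have e0 : ((((m:ℕ)+1:ℕ):ℤ) + d) / 2 = 0 := by push_cast; omega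
        have e2 : ((m:ℤ) + (d+1)) / 2 = 0 := by omega
        rw [e0, e2]
        simp
      · rintro ⟨-, h⟩; omega
    · have h2 : (2:ℤ) ≤ (m:ℤ) + 1 + d := by omega
      rw [bc, bc, bc, if_pos ⟨⟨c, by push_cast; omega⟩, by push_cast; omega⟩,
        if_pos ⟨⟨c-1, by omega⟩, by omega⟩, if_pos ⟨⟨c, by omega⟩, by omega⟩]
      set K : ℤ := ((m:ℤ) + 1 + d) / 2 with hK
      have hKval : (m:ℤ) + 1 + d = 2 * K := by omega
      have hK1 : 1 ≤ K := by omega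
      have e1 : ((((m:ℕ)+1:ℕ):ℤ) + d) / 2 = K := by push_cast; omega
      have e2 : ((m:ℤ) + (d-1)) / 2 = K - 1 := by omega
      have e3 : ((m:ℤ) + (d+1)) / 2 = K := by omega
      rw [e1, e2, e3]
      have t1 : (K : ℤ).toNat = (K-1).toNat + 1 := by omega
      rw [t1, Nat.choose_succ_succ']
  · obtain ⟨c, hc⟩ := ho
    rw [bc, bc, bc, if_neg, if_neg, if_neg]
    · rintro ⟨⟨r, hr⟩, -⟩; omega
    · rintro ⟨⟨r, hr⟩, -⟩; omega
    · rintro ⟨⟨r, hr⟩, -⟩; push_cast at hr; omega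

lemma bc_eq_zero_of_gt (m : ℕ) (d : ℤ) (h : (m : ℤ) < d) : bc m d = 0 := by
  rw [bc]
  split_ifs with h1
  · obtain ⟨⟨c, hc⟩, h0⟩ := h1
    exact Nat.choose_eq_zero_of_lt (by omega)
  · rfl

lemma NC_free (m : ℕ) (p q : ℤ × ℤ) :
    NC (fun _ => True) m p q =
      bc m (q.1 - p.1) * bc m ((q.1 - 2 * q.2) - (p.1 - 2 * p.2)) := by
  induction m generalizing p with
  | zero =>
    rw [NC_zero, bc_zero, bc_zero]
    by_cases h : p = q
    · subst h; norm_num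
    · rw [if_neg h]
      by_cases h1 : q.1 - p.1 = 0
      · by_cases h2 : q.1 - 2*q.2 - (p.1 - 2*p.2) = 0
        · exact absurd (Prod.ext (by omega) (by omega) : p = q) h
        · rw [if_pos h1, if_neg h2, mul_zero]
      · rw [if_neg h1, zero_mul]
  | succ m ih =>
    rw [NC_succ, Fin.sum_univ_four]
    simp only [if_true]
    rw [ih (p + gstep 0), ih (p + gstep 1), ih (p + gstep 2), ih (p + gstep 3)]
    simp only [gstep, Prod.fst_add, Prod.snd_add]
    rw [bc_succ m (q.1 - p.1), bc_succ m (q.1 - 2*q.2 - (p.1 - 2*p.2))]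
    ring_nf

lemma gstep_u (d : Fin 4) : (gstep d).1 = 1 ∨ (gstep d).1 = -1 := by
  fin_cases d <;> simp [gstep]

lemma gstep_y (d : Fin 4) : (gstep d).2 = 0 ∨ (gstep d).2 = 1 ∨ (gstep d).2 = -1 := by
  fin_cases d <;> simp [gstep]

lemma free_swap (m : ℕ) (p' q : ℤ × ℤ) (hp' : p'.2 = -1) :
    NC (fun _ => True) m p' (q.1 - 2 * q.2 - 2, -q.2 - 2) = NC (fun _ => True) m p' q := by
  rw [NC_free, NC_free]
  have e1 : (q.1 - 2 * q.2 - 2, -q.2 - 2).1 - p'.1 = (q.1 - 2*q.2) - (p'.1 - 2*p'.2) := by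
    simp; omega
  have e2 : ((q.1 - 2 * q.2 - 2, -q.2 - 2).1 - 2 * (q.1 - 2 * q.2 - 2, -q.2 - 2).2)
      - (p'.1 - 2 * p'.2) = q.1 - p'.1 := by
    simp; omega
  rw [e1, e2, mul_comm]

lemma NC_half_reflect (m : ℕ) :
    ∀ (p q : ℤ × ℤ), 0 ≤ p.2 → 0 ≤ q.2 →
    NC halfP m p q + NC (fun _ => True) m p (q.1 - 2 * q.2 - 2, -q.2 - 2) =
      NC (fun _ => True) m p q := by
  induction m with
  | zero =>
    intro p q hp hq
    rw [NC_zero, NC_zero, NC_zero]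
    have hne : p ≠ (q.1 - 2 * q.2 - 2, -q.2 - 2) := by
      intro h
      have := congrArg Prod.snd h
      simp at this
      omega
    rw [if_neg hne, add_zero]
  | succ m ih =>
    intro p q hp hq
    rw [NC_succ, NC_succ, NC_succ, ← Finset.sum_add_distrib]
    refine Finset.sum_congr rfl fun d _ => ?_
    simp only [if_true]
    by_cases hd : 0 ≤ (p + gstep d).2
    · rw [if_pos (show halfP (p + gstep d) from hd)]
      exact ih (p + gstep d) q hd hq
    · rw [if_neg (show ¬ halfP (p + gstep d) from hd), zero_add]
      have hp2 : (p + gstep d).2 = -1 := by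
        have := gstep_y d
        simp only [Prod.snd_add] at hd ⊢
        omega
      exact free_swap m (p + gstep d) q hp2

lemma wpos_diff_bound (m : ℕ) (w : Fin m → Fin 4) (i : ℕ) :
    ∀ j, i ≤ j → j ≤ m →
      ((wpos m w j).1 - (wpos m w i).1 ≤ (j : ℤ) - i ∧
       (i : ℤ) - j ≤ (wpos m w j).1 - (wpos m w i).1) ∧
      ((wpos m w j).2 - (wpos m w i).2 ≤ (j : ℤ) - i ∧
       (i : ℤ) - j ≤ (wpos m w j).2 - (wpos m w i).2) := by
  intro j
  induction j with
  | zero => intro h1 h2; interval_cases i; simp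
  | succ j ihj =>
    intro h1 h2
    rcases Nat.lt_or_ge i (j+1) with hij | hij
    · have hj : i ≤ j := by omega
      have hjm : j < m := by omega
      obtain ⟨⟨a1, a2⟩, ⟨b1, b2⟩⟩ := ihj hj (by omega)
      rw [wpos_step m w j hjm]
      have hu := gstep_u (w ⟨j, hjm⟩)
      have hy := gstep_y (w ⟨j, hjm⟩)
      simp only [Prod.fst_add, Prod.snd_add]
      push_cast
      constructor <;> constructor <;> omega
    · have : i = j + 1 := by omega
      subst this
      simp
lemma wpos_parity (m : ℕ) (w : Fin m → Fin 4) :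
    ∀ j, j ≤ m → (wpos m w j).1 % 2 = (j : ℤ) % 2 := by
  intro j
  induction j with
  | zero => intro _; simp [wpos_zero]
  | succ j ihj =>
    intro h
    have hjm : j < m := by omega
    rw [wpos_step m w j hjm]
    have hu := gstep_u (w ⟨j, hjm⟩)
    have := ihj (by omega)
    simp only [Prod.fst_add]
    push_cast
    omega

/-- On the relevant segment the `x ≥ 0` constraint is automatic. -/
lemma NC_quad_eq_half (n s : ℕ) (hs : 1 ≤ s) (b : ℤ) :
    NC quadP (n+1) (2*(s:ℤ) - 1, b) ((n:ℤ), 0) = NC halfP (n+1) (2*(s:ℤ) - 1, b) ((n:ℤ), 0) := by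
  rw [NC, NC]
  apply Nat.card_congr
  apply Equiv.subtypeEquivRight
  intro w
  constructor
  · rintro ⟨h1, h2⟩
    exact ⟨fun j hj1 hj2 => (h1 j hj1 hj2).2, h2⟩
  · rintro ⟨h1, h2⟩
    refine ⟨fun j hj1 hj2 => ⟨?_, h1 j hj1 hj2⟩, h2⟩
    -- x-coordinate nonneg
    have hb1 := ((wpos_diff_bound (n+1) w 0 j (by omega) hj2).1)
    have hb2 := ((wpos_diff_bound (n+1) w j (n+1) (by omega) le_rfl).1)
    have hend : ((2*(s:ℤ) - 1, b) + wpos (n+1) w (n+1)).1 = (n : ℤ) := by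
      rw [h2]
    rw [wpos_zero] at hb1
    simp only [Prod.fst_add] at hend ⊢
    push_cast at hb1 hb2 ⊢
    omega

lemma bc_eq_zero_of_neg (m : ℕ) (d : ℤ) (h : (m:ℤ) + d < 0) : bc m d = 0 := by
  rw [bc, if_neg]
  rintro ⟨-, h0⟩
  omega

lemma bc_eval (m k : ℕ) (d : ℤ) (h : (m:ℤ) + d = 2*k) : bc m d = m.choose k := by
  rw [bc, if_pos ⟨⟨k, by omega⟩, by omega⟩]
  congr 1
  omega

/-- Walks of length n+1 from (2s-1,b) to (n,0) in the half plane: vanishing for b > s. -/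
lemma NC_half_vanish (n s : ℕ) (b : ℤ) (hb : (s:ℤ) < b) :
    NC halfP (n+1) (2*(s:ℤ) - 1, b) ((n:ℤ), 0) = 0 := by
  have h0 : (0:ℤ) ≤ b := by omega
  have hrefl := NC_half_reflect (n+1) (2*(s:ℤ) - 1, b) ((n:ℤ), 0) (by simpa using h0) (by norm_num)
  rw [NC_free, NC_free] at hrefl
  simp only [] at hrefl
  rw [show ((n:ℤ) - 2*0 - (2*(s:ℤ) - 1 - 2*b)) = (n:ℤ) + 1 - 2*(s:ℤ) + 2*b by ring,
    show ((n:ℤ) - 2*0 - 2 - 2*(-0 - 2) - (2*(s:ℤ) - 1 - 2*b)) = (n:ℤ) + 3 - 2*(s:ℤ) + 2*b by ring]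
    at hrefl
  have z1 : bc (n+1) ((n:ℤ) + 1 - 2*(s:ℤ) + 2*b) = 0 :=
    bc_eq_zero_of_gt _ _ (by push_cast; omega)
  have z2 : bc (n+1) ((n:ℤ) + 3 - 2*(s:ℤ) + 2*b) = 0 :=
    bc_eq_zero_of_gt _ _ (by push_cast; omega)
  rw [z1, z2, mul_zero, mul_zero] at hrefl
  omega

/-- The key coefficient evaluation. -/
lemma core_identity (n s t : ℕ) (hs : 1 ≤ s) (ht : t ≤ s) :
    (n + 2) * NC quadP (n+1) (2*(s:ℤ) - 1, (s:ℤ) - (t:ℤ)) ((n:ℤ), 0) =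
      (s - t + 1) * (n + 2).choose (s + 1) * (n + 2).choose t := by
  rw [NC_quad_eq_half n s hs]
  have hb0 : (0:ℤ) ≤ (s:ℤ) - (t:ℤ) := by omega
  have hrefl := NC_half_reflect (n+1) (2*(s:ℤ) - 1, (s:ℤ) - (t:ℤ)) ((n:ℤ), 0)
    (by simpa using hb0) (by norm_num)
  rw [NC_free, NC_free] at hrefl
  simp only [] at hrefl
  rw [show ((n:ℤ) - (2*(s:ℤ) - 1)) = (n:ℤ) + 1 - 2*(s:ℤ) by ring,
    show ((n:ℤ) - 2*0 - (2*(s:ℤ) - 1 - 2*((s:ℤ) - (t:ℤ)))) = (n:ℤ) + 1 - 2*(t:ℤ) by ring,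
    show ((n:ℤ) - 2*0 - 2 - (2*(s:ℤ) - 1)) = (n:ℤ) - 1 - 2*(s:ℤ) by ring,
    show ((n:ℤ) - 2*0 - 2 - 2*(-0 - 2) - (2*(s:ℤ) - 1 - 2*((s:ℤ) - (t:ℤ))))
      = (n:ℤ) + 3 - 2*(t:ℤ) by ring] at hrefl
  rcases Nat.lt_or_ge (n+1) s with hbig | hsn
  · -- s > n+1 : everything vanishes
    have z1 : bc (n+1) ((n:ℤ) + 1 - 2*(s:ℤ)) = 0 := bc_eq_zero_of_neg _ _ (by push_cast; omega)
    have z2 : bc (n+1) ((n:ℤ) - 1 - 2*(s:ℤ)) = 0 := bc_eq_zero_of_neg _ _ (by push_cast; omega)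
    rw [z1, z2, zero_mul, zero_mul] at hrefl
    have hch : (n+2).choose (s+1) = 0 := Nat.choose_eq_zero_of_lt (by omega)
    have hz : NC halfP (n+1) (2*(s:ℤ) - 1, (s:ℤ) - (t:ℤ)) ((n:ℤ), 0) = 0 := by omega
    rw [hch, hz]
    ring
  · -- s ≤ n+1
    have htn : t ≤ n + 1 := ht.trans hsn
    have vA : bc (n+1) ((n:ℤ) + 1 - 2*(s:ℤ)) = (n+1).choose s := by
      rw [bc_eval (n+1) (n+1-s) _ (by push_cast; omega), Nat.choose_symm hsn]
    have vB : bc (n+1) ((n:ℤ) + 1 - 2*(t:ℤ)) = (n+1).choose t := by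
      rw [bc_eval (n+1) (n+1-t) _ (by push_cast; omega), Nat.choose_symm htn]
    have vC : bc (n+1) ((n:ℤ) - 1 - 2*(s:ℤ)) = (n+1).choose (s+1) := by
      rcases Nat.lt_or_ge n s with h1 | h1
      · have hs1 : s = n + 1 := by omega
        rw [bc_eq_zero_of_neg _ _ (by push_cast; omega),
          Nat.choose_eq_zero_of_lt (by omega)]
      · rw [bc_eval (n+1) (n-s) _ (by push_cast; omega),
          show n - s = (n+1) - (s+1) by omega, Nat.choose_symm (by omega)]
    have vD : bc (n+1) ((n:ℤ) + 3 - 2*(t:ℤ)) = (n+1).choose (n+2-t) := by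
      rcases Nat.eq_zero_or_pos t with rfl | h1
      · rw [bc_eq_zero_of_gt _ _ (by push_cast; omega),
          Nat.choose_eq_zero_of_lt (by omega)]
      · rw [bc_eval (n+1) (n+2-t) _ (by push_cast; omega)]
    rw [vA, vB, vC, vD] at hrefl
    -- now a pure binomial identity; move to ℤ
    have key : ((n:ℤ)+2) * ((n+1).choose s * (n+1).choose t)
        = ((s:ℤ) - t + 1) * (n+2).choose (s+1) * (n+2).choose t
          + ((n:ℤ)+2) * ((n+1).choose (s+1) * (n+1).choose (n+2-t)) := by
      have I1s : ((n:ℤ)+2) * (n+1).choose s = ((s:ℤ)+1) * (n+2).choose (s+1) := by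
        have h := congrArg (fun x : ℕ => (x : ℤ)) (Nat.add_one_mul_choose_eq (n+1) s)
        push_cast at h
        linarith [h]
      have I2t : ((n:ℤ)+2) * (n+1).choose t = ((n:ℤ)+2 - t) * (n+2).choose t := by
        have h := congrArg (fun x : ℕ => (x : ℤ)) (Nat.choose_mul_succ_eq (n+1) t)
        push_cast [Nat.cast_sub (show t ≤ n+1+1 by omega),
          Nat.cast_sub (show t ≤ n+2 by omega)] at h
        linarith [h]
      have I2s : ((n:ℤ)+2) * (n+1).choose (s+1) = ((n:ℤ)+1 - s) * (n+2).choose (s+1) := by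
        have h := congrArg (fun x : ℕ => (x : ℤ)) (Nat.choose_mul_succ_eq (n+1) (s+1))
        push_cast [Nat.cast_sub (show s ≤ n+1 by omega),
          Nat.cast_sub (show s+1 ≤ n+1+1 by omega)] at h
        linarith [h]
      have I3 : ((n:ℤ)+2) * (n+1).choose (n+2-t) = (t:ℤ) * (n+2).choose t := by
        rcases Nat.eq_zero_or_pos t with rfl | h1
        · rw [Nat.choose_eq_zero_of_lt (by omega)]
          push_cast
          ring
        · rw [show n+2-t = (n+1) - (t-1) by omega, Nat.choose_symm (by omega)]
          have h0 := Nat.add_one_mul_choose_eq (n+1) (t-1)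
          rw [show t-1+1 = t by omega] at h0
          have h := congrArg (fun x : ℕ => (x : ℤ)) h0
          push_cast at h
          linarith [h]
      have hcancel : ((n:ℤ)+2) ≠ 0 := by positivity
      apply mul_left_cancel₀ hcancel
      calc ((n:ℤ)+2) * (((n:ℤ)+2) * ((n+1).choose s * (n+1).choose t))
          = (((n:ℤ)+2) * (n+1).choose s) * (((n:ℤ)+2) * (n+1).choose t) := by ring
        _ = (((s:ℤ)+1) * (n+2).choose (s+1)) * ((((n:ℤ)+2 - t)) * (n+2).choose t) := by
            rw [I1s, I2t]
        _ = ((n:ℤ)+2) * (((s:ℤ) - t + 1) * (n+2).choose (s+1) * (n+2).choose t)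
            + (((n:ℤ)+1 - s) * (n+2).choose (s+1)) * ((t:ℤ) * (n+2).choose t) := by ring
        _ = ((n:ℤ)+2) * (((s:ℤ) - t + 1) * (n+2).choose (s+1) * (n+2).choose t)
            + (((n:ℤ)+2) * (n+1).choose (s+1)) * (((n:ℤ)+2) * (n+1).choose (n+2-t)) := by
            rw [I2s, I3]
        _ = ((n:ℤ)+2) * (((s:ℤ) - t + 1) * (n+2).choose (s+1) * (n+2).choose t
            + ((n:ℤ)+2) * ((n+1).choose (s+1) * (n+1).choose (n+2-t))) := by ring
    -- conclude in ℕ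
    have hcast : (((n + 2) * NC halfP (n+1) (2*(s:ℤ) - 1, (s:ℤ) - (t:ℤ)) ((n:ℤ), 0) : ℕ) : ℤ)
        = (((s - t + 1) * (n + 2).choose (s + 1) * (n + 2).choose t : ℕ) : ℤ) := by
      have hjoin := congrArg (fun x : ℕ => (x : ℤ)) hrefl
      push_cast at hjoin ⊢
      rw [Nat.cast_sub ht]
      push_cast
      linear_combination key + ((n:ℤ)+2) * hjoin
    exact_mod_cast hcast


lemma NC_quad_zero_outside (m : ℕ) (hm : 1 ≤ m) (q : ℤ × ℤ)
    (h : ¬(0 ≤ q.1 ∧ q.1 ≤ (m:ℤ) ∧ 0 ≤ q.2 ∧ q.2 ≤ (m:ℤ))) :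
    NC quadP m (0, 0) q = 0 := by
  rw [NC, Nat.card_eq_zero]
  left
  constructor
  rintro ⟨w, hw, hend⟩
  have hQ := hw m hm le_rfl
  have hbd := (wpos_diff_bound m w 0 m (by omega) le_rfl)
  rw [wpos_zero] at hbd
  obtain ⟨⟨b1, b2⟩, ⟨b3, b4⟩⟩ := hbd
  rw [hend] at hQ
  apply h
  have e1 : ((0:ℤ), (0:ℤ)) + wpos m w m = wpos m w m := by simp
  rw [e1] at hend
  obtain ⟨hQ1, hQ2⟩ := hQ
  constructor
  · exact hQ1
  refine ⟨?_, hQ2, ?_⟩ <;> rw [← hend] <;> simp at b1 b2 b3 b4 ⊢ <;> omega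

lemma NC_quad_parity (m : ℕ) (q : ℤ × ℤ) (h : NC quadP m (0, 0) q ≠ 0) :
    q.1 % 2 = (m : ℤ) % 2 := by
  rw [NC] at h
  obtain ⟨⟨w, -, hend⟩, -⟩ := Nat.card_ne_zero.1 h
  have := wpos_parity m w m le_rfl
  have e1 : ((0:ℤ), (0:ℤ)) + wpos m w m = wpos m w m := by simp
  rw [e1] at hend
  rw [hend] at this
  exact this

theorem gessel_theorem5 (n k : ℕ) (hk : 1 ≤ k) :
    (n + 2) * gesselF (n + 2 * k) (n : ℤ) 0 =
      ∑ s ∈ Finset.Icc 1 k, ∑ t ∈ Finset.range (s + 1),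
        (s - t + 1) * (n + 2).choose (s + 1) * (n + 2).choose t *
          gesselF (2 * k - 1) (2 * (s : ℤ) - 1) ((s : ℤ) - (t : ℤ)) := by
  set M : ℕ := 2 * k - 1 with hMdef
  have hM1 : 1 ≤ M := by omega
  have hMz : (M:ℤ) = 2*(k:ℤ) - 1 := by push_cast; omega
  have hsplitlen : n + 2 * k = M + (n + 1) := by omega
  rw [gesselF_eq_NC, hsplitlen]
  set S : Finset (ℤ × ℤ) := Finset.Icc ((0:ℤ), (0:ℤ)) ((M:ℤ), (M:ℤ)) with hSdef
  have hsupp : ∀ q, q ∉ S → NC quadP M (0, 0) q = 0 := by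
    intro q hq
    apply NC_quad_zero_outside M hM1
    intro hcon
    apply hq
    rw [hSdef, Finset.mem_Icc]
    constructor <;> rw [Prod.le_def] <;> constructor <;> simp <;> omega
  rw [NC_split quadP M (n+1) (0,0) ((n:ℤ), 0) S hsupp, Finset.mul_sum]
  -- rewrite RHS via NC and flatten
  have hRHS : ∀ (m : ℕ) (a b : ℤ), gesselF m a b = NC quadP m (0,0) (a, b) := gesselF_eq_NC
  simp only [hRHS]
  rw [Finset.sum_sigma' (Finset.Icc 1 k) (fun s => Finset.range (s+1))]
  -- match term shapes
  have hterm : ∀ q ∈ S, (n + 2) * (NC quadP M (0,0) q * NC quadP (n+1) q ((n:ℤ), 0))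
      = NC quadP M (0,0) q * ((n + 2) * NC quadP (n+1) q ((n:ℤ), 0)) := by
    intro q _; ring
  rw [Finset.sum_congr rfl hterm]
  refine Finset.sum_bij_ne_zero
    (fun q _ _ => ⟨((q.1+1)/2).toNat, ((q.1+1)/2 - q.2).toNat⟩) ?_ ?_ ?_ ?_
  · -- maps into target
    rintro ⟨a, b⟩ h1 h2
    rw [hSdef, Finset.mem_Icc, Prod.le_def, Prod.le_def] at h1
    simp only [] at h1 h2 ⊢
    obtain ⟨⟨ha0, hb0⟩, ⟨haM, hbM⟩⟩ := h1
    have hNC1 : NC quadP M (0,0) (a, b) ≠ 0 := by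
      intro h0; rw [h0, zero_mul] at h2; exact h2 rfl
    have hNC2 : NC quadP (n+1) (a, b) ((n:ℤ), 0) ≠ 0 := by
      intro h0; rw [h0, mul_zero, mul_zero] at h2; exact h2 rfl
    have hpar := NC_quad_parity M (a, b) hNC1
    simp only [] at hpar
    have hModd : ((M:ℕ):ℤ) % 2 = 1 := by omega
    -- a = 2s - 1
    set s : ℕ := ((a+1)/2).toNat with hsdef
    have hsa : a = 2 * (s:ℤ) - 1 := by omega
    have hs1 : 1 ≤ s := by omega
    have hsk : s ≤ k := by omega
    -- b ≤ s
    have hbs : b ≤ (s:ℤ) := by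
      by_contra hbs
      apply hNC2
      rw [hsa, NC_quad_eq_half n s hs1 b]
      exact NC_half_vanish n s b (by omega)
    set t : ℕ := ((a+1)/2 - b).toNat with htdef
    have hts : (t:ℤ) = (s:ℤ) - b := by omega
    rw [Finset.mem_sigma]
    constructor
    · show s ∈ Finset.Icc 1 k
      rw [Finset.mem_Icc]; exact ⟨hs1, hsk⟩
    · show t ∈ Finset.range (s + 1)
      rw [Finset.mem_range]; omega
  · -- injective
    rintro ⟨a1, b1⟩ h11 h12 ⟨a2, b2⟩ h21 h22 heq
    simp only [Sigma.mk.inj_iff, heq_eq_eq] at heq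
    obtain ⟨e1, e2⟩ := heq
    rw [hSdef, Finset.mem_Icc, Prod.le_def, Prod.le_def] at h11 h21
    simp only [] at h11 h21
    have hp1 := NC_quad_parity M (a1, b1) (by intro h0; rw [h0, zero_mul] at h12; exact h12 rfl)
    have hp2 := NC_quad_parity M (a2, b2) (by intro h0; rw [h0, zero_mul] at h22; exact h22 rfl)
    simp only [] at hp1 hp2
    have hModd : ((M:ℕ):ℤ) % 2 = 1 := by omega
    have hNC21 : NC quadP (n+1) (a1, b1) ((n:ℤ), 0) ≠ 0 := by
      intro h0; rw [h0, mul_zero, mul_zero] at h12; exact h12 rfl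
    have hNC22 : NC quadP (n+1) (a2, b2) ((n:ℤ), 0) ≠ 0 := by
      intro h0; rw [h0, mul_zero, mul_zero] at h22; exact h22 rfl
    have hbs1 : b1 ≤ (a1+1)/2 := by
      by_contra hbs
      apply hNC21
      have hs1' : 1 ≤ ((a1+1)/2).toNat := by omega
      rw [show a1 = 2 * ((((a1+1)/2).toNat : ℕ) : ℤ) - 1 by omega,
        NC_quad_eq_half n _ hs1' b1]
      exact NC_half_vanish n _ b1 (by omega)
    have hbs2 : b2 ≤ (a2+1)/2 := by
      by_contra hbs
      apply hNC22
      have hs2' : 1 ≤ ((a2+1)/2).toNat := by omega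
      rw [show a2 = 2 * ((((a2+1)/2).toNat : ℕ) : ℤ) - 1 by omega,
        NC_quad_eq_half n _ hs2' b2]
      exact NC_half_vanish n _ b2 (by omega)
    have : a1 = a2 := by omega
    subst this
    have : b1 = b2 := by omega
    subst this
    rfl
  · -- surjective
    rintro ⟨s, t⟩ hmem hne
    dsimp only at hne hmem ⊢
    rw [Finset.mem_sigma, Finset.mem_Icc, Finset.mem_range] at hmem
    obtain ⟨⟨hs1, hsk⟩, htlt⟩ := hmem
    have hs1 : 1 ≤ s := hs1
    have hsk : s ≤ k := hsk
    have htlt : t < s + 1 := htlt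
    refine ⟨(2 * (s:ℤ) - 1, (s:ℤ) - (t:ℤ)), ?_, ?_, ?_⟩
    · rw [hSdef, Finset.mem_Icc]
      constructor <;> rw [Prod.le_def] <;> constructor <;> simp <;> omega
    · -- nonzero
      intro h0
      apply hne
      rcases Nat.mul_eq_zero.1 h0 with hz | hz
      · rw [hz, mul_zero]
      · rw [core_identity n s t hs1 (by omega)] at hz
        rw [show (s - t + 1) * (n + 2).choose (s + 1) * (n + 2).choose t *
            NC quadP M (0,0) (2 * (s : ℤ) - 1, (s : ℤ) - (t : ℤ))
          = ((s - t + 1) * (n + 2).choose (s + 1) * (n + 2).choose t) *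
            NC quadP M (0,0) (2 * (s : ℤ) - 1, (s : ℤ) - (t : ℤ)) by ring, hz, zero_mul]
    · -- index computation
      dsimp only
      congr 1 <;> omega
  · -- value equality
    rintro ⟨a, b⟩ h1 h2
    rw [hSdef, Finset.mem_Icc, Prod.le_def, Prod.le_def] at h1
    simp only [] at h1 h2 ⊢
    obtain ⟨⟨ha0, hb0⟩, ⟨haM, hbM⟩⟩ := h1
    have hNC1 : NC quadP M (0,0) (a, b) ≠ 0 := by
      intro h0; rw [h0, zero_mul] at h2; exact h2 rfl
    have hNC2 : NC quadP (n+1) (a, b) ((n:ℤ), 0) ≠ 0 := by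
      intro h0; rw [h0, mul_zero, mul_zero] at h2; exact h2 rfl
    have hpar := NC_quad_parity M (a, b) hNC1
    simp only [] at hpar
    have hModd : ((M:ℕ):ℤ) % 2 = 1 := by omega
    set s : ℕ := ((a+1)/2).toNat with hsdef
    have hsa : a = 2 * (s:ℤ) - 1 := by omega
    have hs1 : 1 ≤ s := by omega
    have hbs : b ≤ (s:ℤ) := by
      by_contra hbs
      apply hNC2
      rw [hsa, NC_quad_eq_half n s hs1 b]
      exact NC_half_vanish n s b (by omega)
    set t : ℕ := ((a+1)/2 - b).toNat with htdef
    have htb : (s:ℤ) - (t:ℤ) = b := by omega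
    have hts : t ≤ s := by omega
    have hq : (a, b) = (2 * (s:ℤ) - 1, (s:ℤ) - (t:ℤ)) := by
      rw [Prod.ext_iff]
      exact ⟨hsa, htb.symm⟩
    rw [hq, core_identity n s t hs1 hts]
    ring
end

section
/- For all n ≥ 0 and k ≥ 1, F(2n+2k; 0, n) = Σ_{t=0}^{k-2} ((2t+3)/(2n+3)) · C(2n+3, n+t+3) · F(2k-2; 2t+2, t) + Σ_{s=0}^{k-1} Σ_{t=0}^{k-1} ((2t+1)/(2n+3)) · C(2n+2, s+1) · C(2n+3, n+t+2) · F(2k-2; 2t, s+t). -/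
open Finset

namespace GE

/-! ### Partial sum infrastructure -/

section PS
variable {M : Type*} [AddCommMonoid M]

/-- generic partial sum -/
def ps (m : ℕ) (f : Fin m → M) (j : ℕ) : M :=
  ∑ i : Fin m, if (i : ℕ) < j then f i else 0

@[simp] lemma ps_zero (m : ℕ) (f : Fin m → M) : ps m f 0 = 0 := by
  simp [ps]

lemma ps_succ {m : ℕ} (f : Fin m → M) {j : ℕ} (h : j < m) :
    ps m f (j + 1) = ps m f j + f ⟨j, h⟩ := by
  unfold ps
  have key : ∀ i : Fin m, (if (i : ℕ) < j + 1 then f i else 0) =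
      (if (i : ℕ) < j then f i else 0) + (if (i : ℕ) = j then f i else 0) := by
    intro i
    by_cases h1 : (i : ℕ) < j
    · have h2 : (i : ℕ) < j + 1 := by omega
      have h3 : (i : ℕ) ≠ j := by omega
      simp [h1, h2, h3]
    · by_cases h2 : (i : ℕ) = j
      · simp [h1, h2]
      · have h3 : ¬ (i : ℕ) < j + 1 := by omega
        simp [h1, h2, h3]
  rw [Finset.sum_congr rfl fun i _ => key i, Finset.sum_add_distrib]
  congr 1
  rw [Finset.sum_eq_single (⟨j, h⟩ : Fin m)]
  · simp
  · intro b _ hb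
    have : (b : ℕ) ≠ j := fun hbj => hb (Fin.ext hbj)
    simp [this]
  · simp

lemma ps_of_ge {m : ℕ} (f : Fin m → M) {j : ℕ} (h : m ≤ j) :
    ps m f j = ∑ i, f i := by
  unfold ps
  apply Finset.sum_congr rfl
  intro i _
  have : (i : ℕ) < j := lt_of_lt_of_le i.2 h
  simp [this]

lemma ps_last {m : ℕ} (f : Fin m → M) : ps m f m = ∑ i, f i := ps_of_ge f le_rfl

end PS

lemma wpos_eq_ps (m : ℕ) (w : Fin m → Fin 4) (j : ℕ) :
    wpos m w j = ps m (fun i => gstep (w i)) j := rfl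

lemma pSum_eq_ps (m : ℕ) (f : Fin m → ℤ) (j : ℕ) : pSum m f j = ps m f j := rfl

lemma ps_fst {m : ℕ} (f : Fin m → ℤ × ℤ) (j : ℕ) :
    (ps m f j).1 = ps m (fun i => (f i).1) j := by
  unfold ps
  rw [Prod.fst_sum]
  exact Finset.sum_congr rfl fun i _ => by split_ifs <;> simp

lemma ps_snd {m : ℕ} (f : Fin m → ℤ × ℤ) (j : ℕ) :
    (ps m f j).2 = ps m (fun i => (f i).2) j := by
  unfold ps
  rw [Prod.snd_sum]
  exact Finset.sum_congr rfl fun i _ => by split_ifs <;> simp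

/-! ### Step counting -/

/-- number of steps of type `v` among the first `j` steps -/
def cnt {m : ℕ} (w : Fin m → Fin 4) (v : Fin 4) (j : ℕ) : ℕ :=
  ∑ i : Fin m, if (i : ℕ) < j ∧ w i = v then 1 else 0

lemma fin4_cases : ∀ v : Fin 4, v = 0 ∨ v = 1 ∨ v = 2 ∨ v = 3 := by decide

lemma cnt_mono {m : ℕ} (w : Fin m → Fin 4) (v : Fin 4) {j j' : ℕ} (h : j ≤ j') :
    cnt w v j ≤ cnt w v j' := by
  apply Finset.sum_le_sum
  intro i _
  split_ifs with h1 h2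
  · exact le_rfl
  · exact absurd ⟨lt_of_lt_of_le h1.1 h, h1.2⟩ h2
  · exact Nat.zero_le _
  · exact le_rfl

lemma cnt_cast {m : ℕ} (w : Fin m → Fin 4) (v : Fin 4) (j : ℕ) :
    (cnt w v j : ℤ) = ∑ i : Fin m, if (i : ℕ) < j ∧ w i = v then (1 : ℤ) else 0 := by
  unfold cnt
  push_cast
  exact Finset.sum_congr rfl fun i _ => by split_ifs <;> simp

lemma wpos_fst_cnt {m : ℕ} (w : Fin m → Fin 4) (j : ℕ) :
    (wpos m w j).1 = (cnt w 1 j : ℤ) + cnt w 2 j - cnt w 0 j - cnt w 3 j := by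
  rw [wpos_eq_ps, ps_fst, cnt_cast, cnt_cast, cnt_cast, cnt_cast]
  unfold ps
  rw [← Finset.sum_add_distrib, ← Finset.sum_sub_distrib, ← Finset.sum_sub_distrib]
  apply Finset.sum_congr rfl
  intro i _
  by_cases hij : (i : ℕ) < j
  · rcases fin4_cases (w i) with h | h | h | h <;> simp [hij, h, gstep]
  · simp [hij]

lemma wpos_snd_cnt {m : ℕ} (w : Fin m → Fin 4) (j : ℕ) :
    (wpos m w j).2 = (cnt w 2 j : ℤ) - cnt w 3 j := by
  rw [wpos_eq_ps, ps_snd, cnt_cast, cnt_cast]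
  unfold ps
  rw [← Finset.sum_sub_distrib]
  apply Finset.sum_congr rfl
  intro i _
  by_cases hij : (i : ℕ) < j
  · rcases fin4_cases (w i) with h | h | h | h <;> simp [hij, h, gstep]
  · simp [hij]

lemma cnt_sum {m : ℕ} (w : Fin m → Fin 4) :
    cnt w 0 m + cnt w 1 m + cnt w 2 m + cnt w 3 m = m := by
  unfold cnt
  rw [← Finset.sum_add_distrib, ← Finset.sum_add_distrib, ← Finset.sum_add_distrib]
  have : ∀ i : Fin m,
      ((((if (i : ℕ) < m ∧ w i = 0 then 1 else 0) + if (i : ℕ) < m ∧ w i = 1 then 1 else 0) +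
        if (i : ℕ) < m ∧ w i = 2 then 1 else 0) + if (i : ℕ) < m ∧ w i = 3 then 1 else 0) = 1 := by
    intro i
    have hi : (i : ℕ) < m := i.2
    rcases fin4_cases (w i) with h | h | h | h <;> simp [hi, h]
  rw [Finset.sum_congr rfl fun i _ => this i]
  simp


/-! ### Walk counts from arbitrary start -/

/-- number of quadrant walks of length `m` from `p` to `q` -/
noncomputable def Wq (m : ℕ) (p q : ℤ × ℤ) : ℕ :=
  Nat.card {w : Fin m → Fin 4 //
    (∀ j ≤ m, 0 ≤ p.1 + (wpos m w j).1 ∧ 0 ≤ p.2 + (wpos m w j).2) ∧ p + wpos m w m = q}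

@[simp] lemma wpos_zero (m : ℕ) (w : Fin m → Fin 4) : wpos m w 0 = 0 := ps_zero m _

lemma wpos_succ {m : ℕ} (w : Fin m → Fin 4) {j : ℕ} (h : j < m) :
    wpos m w (j + 1) = wpos m w j + gstep (w ⟨j, h⟩) := ps_succ _ h

lemma wpos_of_ge {m : ℕ} (w : Fin m → Fin 4) {j : ℕ} (h : m ≤ j) :
    wpos m w j = wpos m w m := by
  rw [wpos_eq_ps, wpos_eq_ps, ps_of_ge _ h, ps_of_ge _ le_rfl]

lemma gesselF_eq_Wq (m : ℕ) (x y : ℤ) : gesselF m x y = Wq m (0, 0) (x, y) := by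
  apply Nat.card_congr
  apply Equiv.subtypeEquiv (Equiv.refl _)
  intro w
  simp only [Equiv.refl_apply]
  constructor
  · rintro ⟨h1, h2⟩
    refine ⟨?_, by simp [h2, Prod.ext_iff]⟩
    intro j hj
    rcases Nat.eq_zero_or_pos j with rfl | hj1
    · simp
    · simpa using h1 j hj1 hj
  · rintro ⟨h1, h2⟩
    refine ⟨fun j h1j hjm => by simpa using h1 j hjm, ?_⟩
    have := h2
    simpa [Prod.ext_iff] using this

lemma cnt_pair_le {m : ℕ} (w : Fin m → Fin 4) {v v' : Fin 4} (h : v ≠ v') (j : ℕ) :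
    cnt w v j + cnt w v' j ≤ m := by
  unfold cnt
  rw [← Finset.sum_add_distrib]
  calc (∑ i : Fin m, ((if (i : ℕ) < j ∧ w i = v then 1 else 0) +
          if (i : ℕ) < j ∧ w i = v' then 1 else 0))
      ≤ ∑ _i : Fin m, 1 := by
        apply Finset.sum_le_sum
        intro i _
        split_ifs with h1 h2 h2
        · exact absurd (h1.2.symm.trans h2.2) h
        · omega
        · omega
        · omega
    _ = m := by simp

lemma wpos_fst_bound {m : ℕ} (w : Fin m → Fin 4) (j : ℕ) :
    -(m : ℤ) ≤ (wpos m w j).1 ∧ (wpos m w j).1 ≤ m := by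
  have h1 := wpos_fst_cnt w j
  have h2 := cnt_pair_le w (show (1 : Fin 4) ≠ 2 by decide) j
  have h3 := cnt_pair_le w (show (0 : Fin 4) ≠ 3 by decide) j
  omega

lemma wpos_snd_bound {m : ℕ} (w : Fin m → Fin 4) (j : ℕ) :
    -(m : ℤ) ≤ (wpos m w j).2 ∧ (wpos m w j).2 ≤ m := by
  have h1 := wpos_snd_cnt w j
  have h2 := cnt_pair_le w (show (2 : Fin 4) ≠ 3 by decide) j
  omega

/-! ### Cardinality tools -/

lemma natCard_sigma {ι : Type*} [Fintype ι] (T : ι → Type*) [∀ i, Finite (T i)] :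
    Nat.card (Σ i, T i) = ∑ i, Nat.card (T i) := by
  classical
  haveI : ∀ i, Fintype (T i) := fun i => Fintype.ofFinite (T i)
  simp [Nat.card_eq_fintype_card]

lemma card_fiber {α β : Type*} [Finite α] (P : α → Prop) (φ : α → β)
    (S : Finset β) (h : ∀ a, P a → φ a ∈ S) :
    Nat.card {a // P a} = ∑ v ∈ S, Nat.card {a // P a ∧ φ a = v} := by
  classical
  have e : {a // P a} ≃ Σ v : S, {a // P a ∧ φ a = v} :=
    { toFun := fun a => ⟨⟨φ a.1, h a.1 a.2⟩, ⟨a.1, a.2, rfl⟩⟩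
      invFun := fun x => ⟨x.2.1, x.2.2.1⟩
      left_inv := fun a => rfl
      right_inv := fun x => by
        rcases x with ⟨⟨v, hv⟩, ⟨a, ha, hfa⟩⟩
        have hv2 : φ a = v := hfa
        subst hv2
        rfl }
  rw [Nat.card_congr e, natCard_sigma]
  exact Finset.sum_coe_sort S fun v => Nat.card {a // P a ∧ φ a = v}

lemma card_prod_const {α β : Type*} [Finite α] [Finite β] (P : α → Prop) (Q : α → β → Prop)
    (c : ℕ) (h : ∀ a, P a → Nat.card {b // Q a b} = c) :
    Nat.card {x : α × β // P x.1 ∧ Q x.1 x.2} = Nat.card {a // P a} * c := by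
  classical
  have e : {x : α × β // P x.1 ∧ Q x.1 x.2} ≃ Σ a : {a // P a}, {b // Q a.1 b} :=
    { toFun := fun x => ⟨⟨x.1.1, x.2.1⟩, ⟨x.1.2, x.2.2⟩⟩
      invFun := fun y => ⟨(y.1.1, y.2.1), y.1.2, y.2.2⟩
      left_inv := fun x => rfl
      right_inv := fun y => rfl }
  rw [Nat.card_congr e]
  haveI := Fintype.ofFinite {a // P a}
  rw [natCard_sigma]
  rw [Finset.sum_congr rfl fun a _ => h a.1 a.2]
  simp [Finset.card_univ, Nat.card_eq_fintype_card, mul_comm]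

/-! ### Concatenation -/

noncomputable def box (m : ℕ) : Finset (ℤ × ℤ) := Finset.Icc (-(m : ℤ)) m ×ˢ Finset.Icc (-(m : ℤ)) m

lemma wpos_prefix {m1 m2 : ℕ} (w : Fin (m1 + m2) → Fin 4) :
    ∀ {j : ℕ}, j ≤ m1 → wpos (m1 + m2) w j = wpos m1 (fun i => w (Fin.castAdd m2 i)) j := by
  intro j
  induction j with
  | zero => simp
  | succ j ih =>
    intro h
    rw [wpos_succ w (by omega), wpos_succ (fun i => w (Fin.castAdd m2 i)) (by omega : j < m1),
      ih (by omega)]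
    exact congrArg (fun v => wpos m1 (fun i => w (Fin.castAdd m2 i)) j + gstep (w v)) (Fin.ext rfl)

lemma wpos_split {m1 m2 : ℕ} (w : Fin (m1 + m2) → Fin 4) (j : ℕ) :
    wpos (m1 + m2) w (m1 + j) =
      wpos m1 (fun i => w (Fin.castAdd m2 i)) m1 + wpos m2 (fun i => w (Fin.natAdd m1 i)) j := by
  induction j with
  | zero => simp [wpos_prefix w le_rfl]
  | succ j ih =>
    by_cases hj : j < m2
    · rw [show m1 + (j + 1) = (m1 + j) + 1 from rfl, wpos_succ w (by omega),
        wpos_succ (fun i => w (Fin.natAdd m1 i)) hj, ih, add_assoc]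
      exact congrArg (fun v => wpos m1 (fun i => w (Fin.castAdd m2 i)) m1 +
        (wpos m2 (fun i => w (Fin.natAdd m1 i)) j + gstep (w v))) (Fin.ext rfl)
    · have h2 : m2 ≤ j := by omega
      rw [wpos_of_ge w (by omega : m1 + m2 ≤ m1 + (j+1)), ← wpos_of_ge w (by omega : m1 + m2 ≤ m1 + j), ih,
        wpos_of_ge _ (by omega : m2 ≤ j + 1), ← wpos_of_ge _ h2]

lemma Wq_concat (m1 m2 : ℕ) (r : ℤ × ℤ) :
    Wq (m1 + m2) (0, 0) r = ∑ q ∈ box m1, Wq m1 (0, 0) q * Wq m2 q r := by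
  classical
  unfold Wq
  rw [card_fiber _ (fun w => wpos m1 (fun i => w (Fin.castAdd m2 i)) m1) (box m1)
      (by
        intro w _
        simp only [box, Finset.mem_product, Finset.mem_Icc]
        exact ⟨(wpos_fst_bound _ m1), (wpos_snd_bound _ m1)⟩)]
  apply Finset.sum_congr rfl
  intro q _
  rw [← Nat.card_prod]
  apply Nat.card_congr
  refine Equiv.trans (Equiv.subtypeEquiv
    ((Equiv.arrowCongr finSumFinEquiv.symm (Equiv.refl (Fin 4))).trans
      (Equiv.sumArrowEquivProdArrow _ _ _)) ?_) Equiv.subtypeProdEquivProd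
  intro w
  have e1 : ∀ i : Fin m1,
      ((Equiv.arrowCongr finSumFinEquiv.symm (Equiv.refl (Fin 4))).trans
        (Equiv.sumArrowEquivProdArrow _ _ _) w).1 i = w (Fin.castAdd m2 i) := by
    intro i
    simp [Equiv.sumArrowEquivProdArrow, Equiv.arrowCongr]
  have e2 : ∀ i : Fin m2,
      ((Equiv.arrowCongr finSumFinEquiv.symm (Equiv.refl (Fin 4))).trans
        (Equiv.sumArrowEquivProdArrow _ _ _) w).2 i = w (Fin.natAdd m1 i) := by
    intro i
    simp [Equiv.sumArrowEquivProdArrow, Equiv.arrowCongr]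
  have hw1 : ((Equiv.arrowCongr finSumFinEquiv.symm (Equiv.refl (Fin 4))).trans
      (Equiv.sumArrowEquivProdArrow _ _ _) w).1 = fun i => w (Fin.castAdd m2 i) := funext e1
  have hw2 : ((Equiv.arrowCongr finSumFinEquiv.symm (Equiv.refl (Fin 4))).trans
      (Equiv.sumArrowEquivProdArrow _ _ _) w).2 = fun i => w (Fin.natAdd m1 i) := funext e2
  rw [hw1, hw2]
  have hsplit := wpos_split w
  have zz_add : ∀ v : ℤ × ℤ, ((0 : ℤ), (0 : ℤ)) + v = v := by
    intro v; simp [Prod.ext_iff]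
  constructor
  · rintro ⟨⟨hquad, hend⟩, hmid⟩
    refine ⟨⟨?_, ?_⟩, ?_, ?_⟩
    · intro j hj
      have h := hquad j (by omega)
      rwa [wpos_prefix w hj] at h
    · rw [zz_add]; exact hmid
    · intro j hj
      have h := hquad (m1 + j) (by omega)
      rw [hsplit j, hmid] at h
      simpa using h
    · have h := hend
      rw [hsplit m2, hmid, zz_add] at h
      exact h
  · rintro ⟨⟨hq1, hmid⟩, hq2, hend⟩
    rw [zz_add] at hmid
    refine ⟨⟨?_, ?_⟩, hmid⟩
    · intro j hj
      by_cases h : j ≤ m1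
      · rw [wpos_prefix w h]
        exact hq1 j h
      · have hj2 : j = m1 + (j - m1) := by omega
        rw [hj2, hsplit (j - m1), hmid]
        have h2 := hq2 (j - m1) (by omega)
        simpa using h2
    · rw [hsplit m2, hmid, zz_add]
      exact hend


/-! ### The y-condition is free -/

lemma drop_y (n t b : ℕ) {m : ℕ} (hm : m = 2*n+2) (w : Fin m → Fin 4)
    (hx : ∀ j ≤ m, 0 ≤ (2*t : ℤ) + (wpos m w j).1)
    (hxe : (wpos m w m).1 = -(2*t : ℤ))
    (hye : (wpos m w m).2 = (n : ℤ) - b) :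
    ∀ j ≤ m, 0 ≤ (b : ℤ) + (wpos m w j).2 := by
  intro j hj
  have e1 := wpos_fst_cnt w j
  have e2 := wpos_snd_cnt w j
  have e3 := wpos_fst_cnt w m
  have e4 := wpos_snd_cnt w m
  have s := cnt_sum w
  have m0 := cnt_mono w 0 hj
  have m1 := cnt_mono w 1 hj
  have m2 := cnt_mono w 2 hj
  have m3 := cnt_mono w 3 hj
  have hxj := hx j hj
  omega

/-! ### More cardinality tools -/

lemma card_and_not {α : Type*} [Finite α] (P Q : α → Prop) :
    Nat.card {a // P a} = Nat.card {a // P a ∧ Q a} + Nat.card {a // P a ∧ ¬Q a} := by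
  classical
  rw [← Nat.card_sum]
  apply Nat.card_congr
  exact ((Equiv.sumCongr (Equiv.subtypeSubtypeEquivSubtypeInter P Q).symm
    (Equiv.subtypeSubtypeEquivSubtypeInter P (fun a => ¬ Q a)).symm).trans
    (Equiv.sumCompl (fun x : {a // P a} => Q ↑x))).symm

lemma card_bool_count {γ : Type*} [Fintype γ] [DecidableEq γ] (bb : Bool) (c : ℕ) :
    Nat.card {f : γ → Bool // (∑ x : γ, if f x = bb then (1:ℕ) else 0) = c} =
      (Fintype.card γ).choose c := by
  classical
  have e : {f : γ → Bool // (∑ x : γ, if f x = bb then (1:ℕ) else 0) = c} ≃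
      {s : Finset γ // s ∈ Finset.powersetCard c (univ : Finset γ)} :=
    { toFun := fun f => ⟨univ.filter (fun x => f.1 x = bb), by
        rw [Finset.mem_powersetCard]
        refine ⟨Finset.filter_subset _ _, ?_⟩
        rw [Finset.card_filter]
        exact f.2⟩
      invFun := fun s => ⟨fun x => if x ∈ s.1 then bb else !bb, by
        have h1 : ∀ x : γ, (if (if x ∈ s.1 then bb else !bb) = bb then (1:ℕ) else 0) =
            (if x ∈ s.1 then 1 else 0) := by
          intro x
          by_cases hx : x ∈ s.1 <;> simp [hx]
        rw [Finset.sum_congr rfl fun x _ => h1 x, Finset.sum_ite_mem]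
        simp only [Finset.univ_inter, Finset.sum_const, smul_eq_mul, mul_one]
        exact (Finset.mem_powersetCard.1 s.2).2⟩
      left_inv := fun f => by
        apply Subtype.ext
        funext x
        by_cases h : f.1 x = bb
        · simp [h]
        · have : f.1 x = !bb := by
            cases hb : f.1 x <;> cases bb <;> simp_all
          simp [h, this]
      right_inv := fun s => by
        apply Subtype.ext
        ext x
        by_cases hx : x ∈ s.1 <;> simp [hx] }
  rw [Nat.card_congr e, Nat.card_eq_fintype_card]
  rw [Fintype.card_coe, Finset.card_powersetCard]
  simp

/-! ### Discrete IVT -/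

lemma hits_down (p : ℕ → ℤ)
    (hstep : ∀ i, p (i+1) = p i + 1 ∨ p (i+1) = p i - 1 ∨ p (i+1) = p i) (v : ℤ) :
    ∀ jf, v ≤ p 0 → p jf ≤ v → ∃ j, j ≤ jf ∧ p j = v := by
  intro jf
  induction jf with
  | zero => intro h1 h2; exact ⟨0, le_rfl, le_antisymm h2 h1⟩
  | succ jf ih =>
    intro h1 h2
    by_cases hc : p jf ≤ v
    · obtain ⟨j, hj, he⟩ := ih h1 hc
      exact ⟨j, by omega, he⟩
    · have := hstep jf
      exact ⟨jf + 1, le_rfl, by omega⟩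

lemma hits_up (p : ℕ → ℤ)
    (hstep : ∀ i, p (i+1) = p i + 1 ∨ p (i+1) = p i - 1 ∨ p (i+1) = p i) (v : ℤ) :
    ∀ jf, p 0 ≤ v → v ≤ p jf → ∃ j, j ≤ jf ∧ p j = v := by
  intro jf h1 h2
  obtain ⟨j, hj, he⟩ := hits_down (fun j => -(p j)) (fun i => by have := hstep i; omega)
    (-v) jf (by show -v ≤ -(p 0); omega) (by show -(p jf) ≤ -v; omega)
  refine ⟨j, hj, ?_⟩
  have : -(p j) = -v := he
  omega

/-! ### ±1 sequences and flipping -/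

/-- the ±1 sequence of a Bool sequence -/
def pm1 {m : ℕ} (d : Fin m → Bool) : Fin m → ℤ := fun i => if d i then 1 else -1

/-- flip all entries before position `J` -/
def flipB {m : ℕ} (d : Fin m → Bool) (J : ℕ) : Fin m → Bool :=
  fun i => if (i : ℕ) < J then !(d i) else d i

lemma ps_step {m : ℕ} (d : Fin m → Bool) (a : ℤ) (j : ℕ) :
    (a + ps m (pm1 d) (j+1)) = (a + ps m (pm1 d) j) + 1 ∨
    (a + ps m (pm1 d) (j+1)) = (a + ps m (pm1 d) j) - 1 ∨
    (a + ps m (pm1 d) (j+1)) = (a + ps m (pm1 d) j) := by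
  by_cases hm : j < m
  · rw [ps_succ _ hm]
    cases hd : d ⟨j, hm⟩ <;> simp [pm1, hd] <;> omega
  · rw [ps_of_ge _ (by omega), ps_of_ge _ (by omega : m ≤ j)]
    omega

lemma ps_flipB_le {m : ℕ} (d : Fin m → Bool) (J : ℕ) :
    ∀ {j}, j ≤ J → ps m (pm1 (flipB d J)) j = - ps m (pm1 d) j := by
  intro j
  induction j with
  | zero => simp
  | succ j ih =>
    intro h
    by_cases hm : j < m
    · rw [ps_succ _ hm, ps_succ _ hm, ih (by omega)]
      have hlt : ((⟨j, hm⟩ : Fin m) : ℕ) < J := by simp; omega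
      have : pm1 (flipB d J) ⟨j, hm⟩ = - pm1 d ⟨j, hm⟩ := by
        simp only [pm1, flipB, hlt, if_true]
        cases d ⟨j, hm⟩ <;> simp
      rw [this]
      ring
    · rw [ps_of_ge _ (by omega), ps_of_ge _ (by omega),
        ← ps_of_ge (pm1 (flipB d J)) (by omega : m ≤ j), ← ps_of_ge (pm1 d) (by omega : m ≤ j)]
      exact ih (by omega)

lemma ps_flipB_ge {m : ℕ} (d : Fin m → Bool) (J : ℕ) :
    ∀ r, ps m (pm1 (flipB d J)) (J + r) = ps m (pm1 d) (J + r) - 2 * ps m (pm1 d) J := by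
  intro r
  induction r with
  | zero =>
    rw [Nat.add_zero, ps_flipB_le d J le_rfl]
    ring
  | succ r ih =>
    by_cases hm : J + r < m
    · rw [show J + (r+1) = (J+r)+1 from rfl, ps_succ _ hm, ps_succ _ hm, ih]
      have : pm1 (flipB d J) ⟨J + r, hm⟩ = pm1 d ⟨J + r, hm⟩ := by
        simp only [pm1, flipB]
        have : ¬ ((⟨J + r, hm⟩ : Fin m) : ℕ) < J := by simp
        simp [this]
      rw [this]
      ring
    · rw [show J + (r+1) = (J+r)+1 from rfl, ps_of_ge _ (by omega), ps_of_ge _ (by omega),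
        ← ps_of_ge (pm1 (flipB d J)) (by omega : m ≤ J + r), ← ps_of_ge (pm1 d) (by omega : m ≤ J + r)]
      exact ih

lemma ps_pm_end {m : ℕ} (d : Fin m → Bool) :
    ps m (pm1 d) m = (m : ℤ) - 2 * (∑ i : Fin m, if d i = false then (1:ℕ) else 0) := by
  rw [ps_last]
  have h1 : ∀ i : Fin m, pm1 d i = 1 - 2 * (if d i = false then (1:ℤ) else 0) := by
    intro i
    cases hdi : d i <;> simp [pm1, hdi]
  rw [Finset.sum_congr rfl fun i _ => h1 i, Finset.sum_sub_distrib]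
  have h2 : ((∑ i : Fin m, if d i = false then (1:ℕ) else 0 : ℕ) : ℤ) =
      ∑ i : Fin m, if d i = false then (1:ℤ) else 0 := by
    push_cast
    exact Finset.sum_congr rfl fun i _ => by split_ifs <;> simp
  rw [← Finset.mul_sum, h2]
  simp [Finset.card_univ]


/-! ### Ballot counting via reflection -/

/-- number of nonnegative ±1 paths of length `m` from `a` to `0` -/
noncomputable def Xcn (m : ℕ) (a : ℤ) : ℕ :=
  Nat.card {d : Fin m → Bool // (∀ j ≤ m, 0 ≤ a + ps m (pm1 d) j) ∧ a + ps m (pm1 d) m = 0}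

lemma card_end (m : ℕ) (a : ℤ) (c : ℕ) (hc : (2 * c : ℤ) = m + a) :
    Nat.card {d : Fin m → Bool // a + ps m (pm1 d) m = 0} = m.choose c := by
  classical
  have e : {d : Fin m → Bool // a + ps m (pm1 d) m = 0} ≃
      {d : Fin m → Bool // (∑ i : Fin m, if d i = false then (1:ℕ) else 0) = c} := by
    apply Equiv.subtypeEquiv (Equiv.refl _)
    intro d
    simp only [Equiv.refl_apply]
    show a + ps m (pm1 d) m = 0 ↔ (∑ i : Fin m, if d i = false then (1:ℕ) else 0) = c
    rw [ps_pm_end]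
    constructor
    · intro h; omega
    · intro h; omega
  rw [Nat.card_congr e, card_bool_count]
  simp

lemma card_end_zero (m : ℕ) (a : ℤ) (hneg : m + a < 0) :
    Nat.card {d : Fin m → Bool // a + ps m (pm1 d) m = 0} = 0 := by
  rw [Nat.card_eq_zero]
  left
  constructor
  rintro ⟨d, hd⟩
  rw [ps_pm_end] at hd
  have h0 : (0:ℤ) ≤ ((∑ i : Fin m, if d i = false then (1:ℕ) else 0 : ℕ) : ℤ) := by positivity
  omega

lemma flip_flip {m : ℕ} (d : Fin m → Bool) (J : ℕ) : flipB (flipB d J) J = d := by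
  funext i
  by_cases h : (i : ℕ) < J <;> simp [flipB, h]

lemma flip_props {m : ℕ} (a : ℤ) (d : Fin m → Bool) (J : ℕ)
    (hend : a + ps m (pm1 d) m = 0)
    (hJ : a + ps m (pm1 d) J = -1)
    (hmin : ∀ j < J, a + ps m (pm1 d) j ≠ -1) :
    ((-2 - a) + ps m (pm1 (flipB d J)) m = 0) ∧
    ((-2 - a) + ps m (pm1 (flipB d J)) J = -1) ∧
    (∀ j < J, (-2 - a) + ps m (pm1 (flipB d J)) j ≠ -1) ∧
    flipB (flipB d J) J = d := by
  have hJm : J ≤ m := by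
    by_contra h
    rw [ps_of_ge _ (by omega : m ≤ J), ← ps_of_ge (pm1 d) (le_refl m)] at hJ
    omega
  have h1 := ps_flipB_le d J (le_refl J)
  have h2 := ps_flipB_ge d J (m - J)
  rw [show J + (m - J) = m by omega] at h2
  refine ⟨by omega, by omega, ?_, flip_flip d J⟩
  intro j hj hc
  have h3 := ps_flipB_le d J (le_of_lt hj)
  rw [h3] at hc
  exact hmin j hj (by omega)

lemma ballot (n t : ℕ) :
    (2*n+3) * Xcn (2*n+2) (2*(t:ℤ)) = (2*t+1) * (2*n+3).choose (n+t+2) := by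
  classical
  set m := 2*n+2 with hm
  set a : ℤ := 2*(t:ℤ) with hadef
  have ha : 0 ≤ a := by positivity
  set End : (Fin m → Bool) → Prop := fun d => a + ps m (pm1 d) m = 0 with hEnd
  set Hit : (Fin m → Bool) → Prop := fun d => ∃ j, a + ps m (pm1 d) j = -1 with hHit
  have hX : Xcn m a = Nat.card {d : Fin m → Bool // End d ∧ ¬ Hit d} := by
    apply Nat.card_congr
    apply Equiv.subtypeEquiv (Equiv.refl _)
    intro d
    simp only [Equiv.refl_apply, hEnd, hHit]
    constructor
    · rintro ⟨hnn, hend⟩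
      refine ⟨hend, ?_⟩
      rintro ⟨j, hj⟩
      by_cases hjm : j ≤ m
      · have := hnn j hjm
        omega
      · rw [ps_of_ge _ (by omega : m ≤ j), ← ps_of_ge (pm1 d) (le_refl m)] at hj
        omega
    · rintro ⟨hend, hnohit⟩
      refine ⟨?_, hend⟩
      intro j hj
      by_contra hneg
      obtain ⟨j', _, hv⟩ := hits_down (fun j => a + ps m (pm1 d) j)
        (fun i => ps_step d a i) (-1) j
        (by show (-1 : ℤ) ≤ a + ps m (pm1 d) 0; rw [ps_zero]; omega)
        (by show a + ps m (pm1 d) j ≤ -1; omega)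
      exact hnohit ⟨j', hv⟩
  have hpart := card_and_not End Hit
  have hex : ∀ e : Fin m → Bool, ((-2 - a) + ps m (pm1 e) m = 0) →
      ∃ j, (-2 - a) + ps m (pm1 e) j = -1 := by
    intro e he
    obtain ⟨j, _, hv⟩ := hits_up (fun j => (-2 - a) + ps m (pm1 e) j)
      (fun i => ps_step e _ i) (-1) m
      (by show (-2 - a) + ps m (pm1 e) 0 ≤ -1; rw [ps_zero]; omega)
      (by show (-1 : ℤ) ≤ (-2 - a) + ps m (pm1 e) m; omega)
    exact ⟨j, hv⟩
  have hBad : Nat.card {d : Fin m → Bool // End d ∧ Hit d} =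
      Nat.card {e : Fin m → Bool // (-2 - a) + ps m (pm1 e) m = 0} := by
    apply Nat.card_congr
    refine
      { toFun := fun d => ⟨flipB d.1 (Nat.find d.2.2), ?_⟩
        invFun := fun e => ⟨flipB e.1 (Nat.find (hex e.1 e.2)), ?_, ?_⟩
        left_inv := ?_
        right_inv := ?_ }
    · exact (flip_props a d.1 (Nat.find d.2.2) d.2.1 (Nat.find_spec d.2.2)
        (fun j hj => Nat.find_min d.2.2 hj)).1
    · have hp := flip_props (-2 - a) e.1 (Nat.find (hex e.1 e.2)) e.2
        (Nat.find_spec (hex e.1 e.2)) (fun j hj => Nat.find_min (hex e.1 e.2) hj)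
      rw [show -2 - (-2 - a) = a by ring] at hp
      exact hp.1
    · have hp := flip_props (-2 - a) e.1 (Nat.find (hex e.1 e.2)) e.2
        (Nat.find_spec (hex e.1 e.2)) (fun j hj => Nat.find_min (hex e.1 e.2) hj)
      rw [show -2 - (-2 - a) = a by ring] at hp
      exact ⟨_, hp.2.1⟩
    · rintro ⟨d, hend, hhit⟩
      have hp := flip_props a d (Nat.find hhit) hend (Nat.find_spec hhit)
        (fun j hj => Nat.find_min hhit hj)
      apply Subtype.ext
      have key : ∀ (hh : ∃ j, (-2 - a) + ps m (pm1 (flipB d (Nat.find hhit))) j = -1),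
          flipB (flipB d (Nat.find hhit)) (Nat.find hh) = d := by
        intro hh
        have h5 : Nat.find hh = Nat.find hhit :=
          (Nat.find_eq_iff hh).2 ⟨hp.2.1, fun j hj => hp.2.2.1 j hj⟩
        rw [h5]
        exact hp.2.2.2
      exact key _
    · rintro ⟨e, hend⟩
      have hp := flip_props (-2 - a) e (Nat.find (hex e hend)) hend
        (Nat.find_spec (hex e hend)) (fun j hj => Nat.find_min (hex e hend) hj)
      rw [show -2 - (-2 - a) = a by ring] at hp
      apply Subtype.ext
      have key : ∀ (hh : ∃ j, a + ps m (pm1 (flipB e (Nat.find (hex e hend)))) j = -1),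
          flipB (flipB e (Nat.find (hex e hend))) (Nat.find hh) = e := by
        intro hh
        have h5 : Nat.find hh = Nat.find (hex e hend) :=
          (Nat.find_eq_iff hh).2 ⟨hp.2.1, fun j hj => hp.2.2.1 j hj⟩
        rw [h5]
        exact hp.2.2.2
      exact key _
  have hTot : Nat.card {d : Fin m → Bool // End d} = (2*n+2).choose (n+t+1) := by
    rw [hEnd]
    apply card_end
    push_cast [hm, hadef]
    ring
  have hBadVal : Nat.card {e : Fin m → Bool // (-2 - a) + ps m (pm1 e) m = 0} =
      (2*n+2).choose (n+t+2) := by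
    rcases le_or_gt t n with htn | htn
    · rw [card_end m (-2-a) (n - t) (by push_cast [hm, hadef]; omega)]
      rw [show n - t = (2*n+2) - (n+t+2) by omega, Nat.choose_symm (by omega)]
    · rw [card_end_zero m (-2-a) (by push_cast [hm, hadef]; omega)]
      rw [Nat.choose_eq_zero_of_lt (by omega)]
  have hXval : Xcn m a + (2*n+2).choose (n+t+2) = (2*n+2).choose (n+t+1) := by
    rw [hX, ← hBadVal, ← hBad, ← hTot, hpart]
    ring
  have key : (2*(n:ℤ)+3) * (Xcn m a : ℤ) = (2*(t:ℤ)+1) * ((2*n+3).choose (n+t+2) : ℤ) := by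
    have hXv : (Xcn m a : ℤ) = ((2*n+2).choose (n+t+1) : ℤ) - ((2*n+2).choose (n+t+2) : ℤ) := by
      omega
    have hpascal : (2*n+3).choose (n+t+2) = (2*n+2).choose (n+t+1) + (2*n+2).choose (n+t+2) := by
      rw [show 2*n+3 = (2*n+2)+1 by ring, show n+t+2 = (n+t+1)+1 by ring]
      exact Nat.choose_succ_succ _ _
    have hpZ : ((2*n+3).choose (n+t+2) : ℤ) =
        ((2*n+2).choose (n+t+1) : ℤ) + ((2*n+2).choose (n+t+2) : ℤ) := by
      exact_mod_cast hpascal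
    rcases le_or_gt t (n+1) with htn | htn
    · have hr := Nat.choose_succ_right_eq (2*n+2) (n+t+1)
      rw [show (n+t+1)+1 = n+t+2 by ring] at hr
      zify [show n+t+1 ≤ 2*n+2 by omega] at hr
      linear_combination (2*(n:ℤ)+3) * hXv - (2*(t:ℤ)+1) * hpZ - 2*hr
    · have hz1 : (2*n+2).choose (n+t+1) = 0 := Nat.choose_eq_zero_of_lt (by omega)
      have hz3 : (2*n+2).choose (n+t+2) = 0 := Nat.choose_eq_zero_of_lt (by omega)
      have hz4 : Xcn m a = 0 := by omega
      rw [hz4, hpZ, hz1, hz3]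
      simp
  exact_mod_cast key


/-! ### Counting the diagonal choices -/

lemma cast_count {m : ℕ} (P : Fin m → Prop) [DecidablePred P] :
    ((∑ i : Fin m, if P i then (1:ℕ) else 0 : ℕ) : ℤ) = ∑ i : Fin m, if P i then (1:ℤ) else 0 := by
  push_cast
  exact Finset.sum_congr rfl fun i _ => by split_ifs <;> simp

lemma count_and_split {m : ℕ} (P Q : Fin m → Prop) [DecidablePred P] [DecidablePred Q] :
    (∑ i : Fin m, if P i ∧ Q i then (1:ℕ) else 0) +
      (∑ i : Fin m, if P i ∧ ¬ Q i then (1:ℕ) else 0) =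
      ∑ i : Fin m, if P i then (1:ℕ) else 0 := by
  rw [← Finset.sum_add_distrib]
  exact Finset.sum_congr rfl fun i _ => by
    by_cases hP : P i <;> by_cases hQ : Q i <;> simp [hP, hQ]

lemma card_subtype_count {m : ℕ} (P : Fin m → Prop) [DecidablePred P] :
    Fintype.card {x : Fin m // P x} = ∑ i : Fin m, if P i then (1:ℕ) else 0 := by
  rw [Fintype.card_subtype, Finset.card_filter]

lemma count_restrict {m : ℕ} (P : Fin m → Prop) [DecidablePred P] (F : Fin m → ℕ) :
    (∑ x : {x : Fin m // P x}, F ↑x) = ∑ i : Fin m, if P i then F i else 0 := by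
  rw [← Finset.sum_filter]
  exact (Finset.sum_subtype (Finset.univ.filter P) (fun x => by simp) F).symm

/-- split a Bool-function along the fibers of `d` -/
def boolSplit {m : ℕ} (d : Fin m → Bool) :
    (Fin m → Bool) ≃ ({x : Fin m // d x = true} → Bool) × ({x : Fin m // ¬ d x = true} → Bool) :=
  { toFun := fun g => (fun x => g ↑x, fun x => g ↑x)
    invFun := fun p i => if h : d i = true then p.1 ⟨i, h⟩ else p.2 ⟨i, h⟩
    left_inv := fun g => by
      funext i
      by_cases h : d i = true <;> simp [h]
    right_inv := fun p => by
      refine Prod.ext ?_ ?_ <;> funext x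
      · simp only [dif_pos x.2]
      · simp only [dif_neg x.2] }

lemma gcount {m : ℕ} (d : Fin m → Bool) (z : ℤ) (c : ℕ)
    (hc : (c : ℤ) = ((∑ i : Fin m, if d i = true then (1:ℕ) else 0 : ℕ) : ℤ) - z) :
    Nat.card {g : Fin m → Bool //
      ps m (fun i => if g i then pm1 d i else 0) m = z} = m.choose c := by
  classical
  have hysplit : ∀ g : Fin m → Bool,
      ps m (fun i => if g i then pm1 d i else 0) m =
        ((∑ i : Fin m, if d i = true ∧ g i = true then (1:ℕ) else 0 : ℕ) : ℤ) -
        ((∑ i : Fin m, if d i = false ∧ g i = true then (1:ℕ) else 0 : ℕ) : ℤ) := by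
    intro g
    rw [ps_last, cast_count, cast_count, ← Finset.sum_sub_distrib]
    exact Finset.sum_congr rfl fun i _ => by
      cases hd : d i <;> cases hg : g i <;> simp [pm1, hd, hg]
  rw [card_fiber _ (fun g : Fin m → Bool =>
      ((∑ i : Fin m, if d i = true ∧ g i = false then (1:ℕ) else 0),
       (∑ i : Fin m, if d i = false ∧ g i = true then (1:ℕ) else 0)))
      (Finset.HasAntidiagonal.antidiagonal c) ?memS]
  case memS =>
    intro g hg
    rw [Finset.HasAntidiagonal.mem_antidiagonal]
    dsimp only
    rw [hysplit g] at hg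
    have h1 : (∑ i : Fin m, if d i = true ∧ g i = true then (1:ℕ) else 0) +
        (∑ i : Fin m, if d i = true ∧ g i = false then (1:ℕ) else 0) =
        ∑ i : Fin m, if d i = true then (1:ℕ) else 0 := by
      rw [← Finset.sum_add_distrib]
      exact Finset.sum_congr rfl fun i _ => by
        cases hd : d i <;> cases hgi : g i <;> simp [hd, hgi]
    omega
  · -- per-fiber count
    have hfiber : ∀ ij : ℕ × ℕ, ij ∈ Finset.HasAntidiagonal.antidiagonal c →
        Nat.card {g : Fin m → Bool //
          ps m (fun i => if g i then pm1 d i else 0) m = z ∧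
          ((∑ i : Fin m, if d i = true ∧ g i = false then (1:ℕ) else 0),
           (∑ i : Fin m, if d i = false ∧ g i = true then (1:ℕ) else 0)) = ij} =
        (∑ i : Fin m, if d i = true then (1:ℕ) else 0).choose ij.1 *
        (∑ i : Fin m, if d i = false then (1:ℕ) else 0).choose ij.2 := by
      rintro ⟨i0, j0⟩ hij
      rw [Finset.HasAntidiagonal.mem_antidiagonal] at hij
      -- drop the redundant main condition
      have e1 : {g : Fin m → Bool //
          ps m (fun i => if g i then pm1 d i else 0) m = z ∧
          ((∑ i : Fin m, if d i = true ∧ g i = false then (1:ℕ) else 0),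
           (∑ i : Fin m, if d i = false ∧ g i = true then (1:ℕ) else 0)) = (i0, j0)} ≃
          {g : Fin m → Bool //
          (∑ i : Fin m, if d i = true ∧ g i = false then (1:ℕ) else 0) = i0 ∧
          (∑ i : Fin m, if d i = false ∧ g i = true then (1:ℕ) else 0) = j0} := by
        apply Equiv.subtypeEquiv (Equiv.refl _)
        intro g
        simp only [Equiv.refl_apply, Prod.mk.injEq]
        show (ps m (fun i => if g i then pm1 d i else 0) m = z ∧
            (∑ i : Fin m, if d i = true ∧ g i = false then (1:ℕ) else 0) = i0 ∧
            (∑ i : Fin m, if d i = false ∧ g i = true then (1:ℕ) else 0) = j0) ↔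
          ((∑ i : Fin m, if d i = true ∧ g i = false then (1:ℕ) else 0) = i0 ∧
            (∑ i : Fin m, if d i = false ∧ g i = true then (1:ℕ) else 0) = j0)
        constructor
        · rintro ⟨_, h⟩; exact h
        · rintro ⟨hA, hB⟩
          refine ⟨?_, hA, hB⟩
          rw [hysplit g]
          have h1 : (∑ i : Fin m, if d i = true ∧ g i = true then (1:ℕ) else 0) +
              (∑ i : Fin m, if d i = true ∧ g i = false then (1:ℕ) else 0) =
              ∑ i : Fin m, if d i = true then (1:ℕ) else 0 := by
            rw [← Finset.sum_add_distrib]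
            exact Finset.sum_congr rfl fun i _ => by
              cases hd : d i <;> cases hgi : g i <;> simp [hd, hgi]
          have hc2 : (c : ℤ) = ((∑ i : Fin m, if d i = true then (1:ℕ) else 0 : ℕ) : ℤ) - z := hc
          omega
      rw [Nat.card_congr e1]
      -- split along d
      have e2 : {g : Fin m → Bool //
          (∑ i : Fin m, if d i = true ∧ g i = false then (1:ℕ) else 0) = i0 ∧
          (∑ i : Fin m, if d i = false ∧ g i = true then (1:ℕ) else 0) = j0} ≃
          {p : ({x : Fin m // d x = true} → Bool) × ({x : Fin m // ¬ d x = true} → Bool) //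
            (∑ x : {x : Fin m // d x = true}, if p.1 x = false then (1:ℕ) else 0) = i0 ∧
            (∑ x : {x : Fin m // ¬ d x = true}, if p.2 x = true then (1:ℕ) else 0) = j0} := by
        apply Equiv.subtypeEquiv (boolSplit d)
        intro g
        have hA : (∑ x : {x : Fin m // d x = true}, if g ↑x = false then (1:ℕ) else 0) =
            ∑ i : Fin m, if d i = true ∧ g i = false then (1:ℕ) else 0 := by
          rw [count_restrict (fun i => d i = true) (fun i => if g i = false then 1 else 0)]
          exact Finset.sum_congr rfl fun i _ => by
            by_cases h1 : d i = true <;> by_cases h2 : g i = false <;> simp [h1, h2]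
        have hB : (∑ x : {x : Fin m // ¬ d x = true}, if g ↑x = true then (1:ℕ) else 0) =
            ∑ i : Fin m, if d i = false ∧ g i = true then (1:ℕ) else 0 := by
          rw [count_restrict (fun i => ¬ d i = true) (fun i => if g i = true then 1 else 0)]
          exact Finset.sum_congr rfl fun i _ => by
            cases h1 : d i <;> by_cases h2 : g i = true <;> simp [h1, h2]
        have hbs1 : ((boolSplit d) g).1 = fun x : {x : Fin m // d x = true} => g x.1 := rfl
        have hbs2 : ((boolSplit d) g).2 = fun x : {x : Fin m // ¬ d x = true} => g x.1 := rfl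
        rw [hbs1, hbs2, hA, hB]
      rw [Nat.card_congr e2]
      have e3 := Nat.card_congr (Equiv.subtypeProdEquivProd
        (p := fun f : {x : Fin m // d x = true} → Bool =>
          (∑ x : {x : Fin m // d x = true}, if f x = false then (1:ℕ) else 0) = i0)
        (q := fun f : {x : Fin m // ¬ d x = true} → Bool =>
          (∑ x : {x : Fin m // ¬ d x = true}, if f x = true then (1:ℕ) else 0) = j0))
      rw [e3, Nat.card_prod]
      rw [card_bool_count false i0, card_bool_count true j0]
      rw [card_subtype_count (fun x => d x = true)]
      rw [card_subtype_count (fun x => ¬ d x = true)]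
      congr 2
      exact Finset.sum_congr rfl fun i _ => by cases h : d i <;> simp [h]
    rw [Finset.sum_congr rfl hfiber]
    -- Vandermonde
    have hV := Nat.add_choose_eq (∑ i : Fin m, if d i = true then (1:ℕ) else 0)
      (∑ i : Fin m, if d i = false then (1:ℕ) else 0) c
    have hUV : (∑ i : Fin m, if d i = true then (1:ℕ) else 0) +
        (∑ i : Fin m, if d i = false then (1:ℕ) else 0) = m := by
      rw [← Finset.sum_add_distrib]
      have : ∀ i : Fin m, ((if d i = true then (1:ℕ) else 0) +
          (if d i = false then (1:ℕ) else 0)) = 1 := by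
        intro i; cases h : d i <;> simp [h]
      rw [Finset.sum_congr rfl fun i _ => this i]
      simp
    rw [hUV] at hV
    rw [← hV]

/-! ### Encoding walks as pairs of Bool sequences -/

def enc : Bool × Bool → Fin 4
  | (false, false) => 0
  | (true, false) => 1
  | (true, true) => 2
  | (false, true) => 3

def dec4 : Fin 4 → Bool × Bool
  | 0 => (false, false)
  | 1 => (true, false)
  | 2 => (true, true)
  | 3 => (false, true)

def Epair (m : ℕ) : ((Fin m → Bool) × (Fin m → Bool)) ≃ (Fin m → Fin 4) :=
  { toFun := fun p i => enc (p.1 i, p.2 i)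
    invFun := fun w => (fun i => (dec4 (w i)).1, fun i => (dec4 (w i)).2)
    left_inv := fun p => by
      refine Prod.ext ?_ ?_ <;> funext i
      · exact (by decide : ∀ x y : Bool, (dec4 (enc (x, y))).1 = x) _ _
      · exact (by decide : ∀ x y : Bool, (dec4 (enc (x, y))).2 = y) _ _
    right_inv := fun w => by
      funext i
      exact (by decide : ∀ v : Fin 4, enc ((dec4 v).1, (dec4 v).2) = v) _ }

lemma wpos_enc_fst {m : ℕ} (d g : Fin m → Bool) (j : ℕ) :
    (wpos m (fun i => enc (d i, g i)) j).1 = ps m (pm1 d) j := by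
  rw [wpos_eq_ps, ps_fst]
  unfold ps
  exact Finset.sum_congr rfl fun i _ => by
    split_ifs with h
    · exact (by decide : ∀ x y : Bool, (gstep (enc (x, y))).1 = (if x then (1:ℤ) else -1)) (d i) (g i)
    · rfl

lemma wpos_enc_snd {m : ℕ} (d g : Fin m → Bool) (j : ℕ) :
    (wpos m (fun i => enc (d i, g i)) j).2 = ps m (fun i => if g i then pm1 d i else 0) j := by
  rw [wpos_eq_ps, ps_snd]
  unfold ps
  exact Finset.sum_congr rfl fun i _ => by
    split_ifs with h
    · exact (by decide : ∀ x y : Bool,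
        (gstep (enc (x, y))).2 = (if y then (if x then (1:ℤ) else -1) else 0)) (d i) (g i)
    · rfl

/-! ### The transfer count -/

lemma lemA (n t b : ℕ) (ht : t ≤ b + 1) :
    (2*n+3) * Wq (2*n+2) ((2*(t:ℤ)), (b:ℤ)) (0, (n:ℤ)) =
      (2*t+1) * (2*n+2).choose (b+1-t) * (2*n+3).choose (n+t+2) := by
  classical
  set m := 2*n+2 with hm
  -- step 1 : drop the y-nonnegativity condition
  have h1 : Wq m ((2*(t:ℤ)), (b:ℤ)) (0, (n:ℤ)) =
      Nat.card {w : Fin m → Fin 4 //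
        ((∀ j ≤ m, 0 ≤ 2*(t:ℤ) + (wpos m w j).1) ∧ 2*(t:ℤ) + (wpos m w m).1 = 0) ∧
        ((wpos m w m).2 = (n:ℤ) - b)} := by
    apply Nat.card_congr
    apply Equiv.subtypeEquiv (Equiv.refl _)
    intro w
    simp only [Equiv.refl_apply]
    constructor
    · rintro ⟨hquad, hend⟩
      have hex : (2*(t:ℤ) + (wpos m w m).1 = 0) ∧ ((b:ℤ) + (wpos m w m).2 = n) := by
        constructor
        · have := congrArg Prod.fst hend
          simpa using this
        · have := congrArg Prod.snd hend
          simpa using this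
      exact ⟨⟨fun j hj => (hquad j hj).1, hex.1⟩, by omega⟩
    · rintro ⟨⟨hx, hxe⟩, hye⟩
      have hy := drop_y n t b hm w (by simpa using hx) (by omega) hye
      constructor
      · intro j hj
        exact ⟨by simpa using hx j hj, by simpa using hy j hj⟩
      · have h1 : (2*(t:ℤ), (b:ℤ)) + wpos m w m =
            (2*(t:ℤ) + (wpos m w m).1, (b:ℤ) + (wpos m w m).2) := rfl
        rw [h1]
        have : (b:ℤ) + (wpos m w m).2 = n := by omega
        rw [Prod.mk.injEq]
        exact ⟨by omega, this⟩
  rw [h1]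
  -- step 2 : encode as pairs
  have h2 : Nat.card {w : Fin m → Fin 4 //
        ((∀ j ≤ m, 0 ≤ 2*(t:ℤ) + (wpos m w j).1) ∧ 2*(t:ℤ) + (wpos m w m).1 = 0) ∧
        ((wpos m w m).2 = (n:ℤ) - b)} =
      Nat.card {p : (Fin m → Bool) × (Fin m → Bool) //
        ((∀ j ≤ m, 0 ≤ 2*(t:ℤ) + ps m (pm1 p.1) j) ∧ 2*(t:ℤ) + ps m (pm1 p.1) m = 0) ∧
        (ps m (fun i => if p.2 i then pm1 p.1 i else 0) m = (n:ℤ) - b)} := by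
    symm
    apply Nat.card_congr
    apply Equiv.subtypeEquiv (Epair m)
    rintro ⟨d, g⟩
    dsimp only
    have he : Epair m (d, g) = fun i => enc (d i, g i) := rfl
    rw [he]
    constructor
    · rintro ⟨⟨hx, hxe⟩, hye⟩
      refine ⟨⟨fun j hj => ?_, ?_⟩, ?_⟩
      · have := hx j hj
        rwa [← wpos_enc_fst d g] at this
      · rwa [← wpos_enc_fst d g] at hxe
      · rwa [← wpos_enc_snd d g] at hye
    · rintro ⟨⟨hx, hxe⟩, hye⟩
      refine ⟨⟨fun j hj => ?_, ?_⟩, ?_⟩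
      · have := hx j hj
        rwa [wpos_enc_fst d g] at this
      · rwa [wpos_enc_fst d g] at hxe
      · rwa [wpos_enc_snd d g] at hye
  rw [h2]
  -- step 3 : product structure
  have h3 : Nat.card {p : (Fin m → Bool) × (Fin m → Bool) //
        ((∀ j ≤ m, 0 ≤ 2*(t:ℤ) + ps m (pm1 p.1) j) ∧ 2*(t:ℤ) + ps m (pm1 p.1) m = 0) ∧
        (ps m (fun i => if p.2 i then pm1 p.1 i else 0) m = (n:ℤ) - b)} =
      Xcn m (2*(t:ℤ)) * (2*n+2).choose (b+1-t) := by
    rw [Xcn]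
    refine card_prod_const (α := Fin m → Bool) (β := Fin m → Bool)
      (fun d => (∀ j ≤ m, 0 ≤ 2*(t:ℤ) + ps m (pm1 d) j) ∧ 2*(t:ℤ) + ps m (pm1 d) m = 0)
      (fun d g => ps m (fun i => if g i then pm1 d i else 0) m = (n:ℤ) - b)
      ((2*n+2).choose (b+1-t)) ?_
    intro d hd
    apply gcount
    have hend := hd.2
    rw [ps_pm_end] at hend
    have hUV : (∑ i : Fin m, if d i = true then (1:ℕ) else 0) +
        (∑ i : Fin m, if d i = false then (1:ℕ) else 0) = m := by
      rw [← Finset.sum_add_distrib]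
      have : ∀ i : Fin m, ((if d i = true then (1:ℕ) else 0) +
          (if d i = false then (1:ℕ) else 0)) = 1 := by
        intro i; cases h : d i <;> simp [h]
      rw [Finset.sum_congr rfl fun i _ => this i]
      simp
    omega
  rw [h3]
  have hb := ballot n t
  calc (2*n+3) * (Xcn m (2*(t:ℤ)) * (2*n+2).choose (b+1-t))
      = ((2*n+3) * Xcn m (2*(t:ℤ))) * (2*n+2).choose (b+1-t) := by ring
    _ = ((2*t+1) * (2*n+3).choose (n+t+2)) * (2*n+2).choose (b+1-t) := by rw [hb]
    _ = (2*t+1) * (2*n+2).choose (b+1-t) * (2*n+3).choose (n+t+2) := by ring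


/-! ### Facts about nonvanishing walk counts -/

lemma Wq_facts {m : ℕ} {p q : ℤ × ℤ} (h : Wq m p q ≠ 0) :
    0 ≤ q.1 ∧ 0 ≤ q.2 ∧ p.1 - m ≤ q.1 ∧ q.1 ≤ p.1 + m ∧ p.2 - m ≤ q.2 ∧ q.2 ≤ p.2 + m ∧
    (2 ∣ (q.1 - p.1 + m)) ∧ 2*(q.2 - p.2) - (q.1 - p.1) ≤ m := by
  have hpos : 0 < Nat.card {w : Fin m → Fin 4 //
      (∀ j ≤ m, 0 ≤ p.1 + (wpos m w j).1 ∧ 0 ≤ p.2 + (wpos m w j).2) ∧ p + wpos m w m = q} := by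
    unfold Wq at h
    omega
  obtain ⟨⟨w, hquad, hend⟩, -⟩ := Nat.card_pos_iff.mp hpos
  have hfst : q.1 = p.1 + (wpos m w m).1 := by rw [← hend]; rfl
  have hsnd : q.2 = p.2 + (wpos m w m).2 := by rw [← hend]; rfl
  have hq := hquad m le_rfl
  have e3 := wpos_fst_cnt w m
  have e4 := wpos_snd_cnt w m
  have s := cnt_sum w
  have b1 := wpos_fst_bound w m
  have b2 := wpos_snd_bound w m
  omega

end GE

theorem gessel_eq19 (n k : ℕ) (hk : 1 ≤ k) :
    (2 * n + 3) * gesselF (2 * n + 2 * k) 0 (n : ℤ) =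
      (∑ t ∈ Finset.range (k - 1),
        (2 * t + 3) * (2 * n + 3).choose (n + t + 3) *
          gesselF (2 * k - 2) (2 * (t : ℤ) + 2) (t : ℤ)) +
      ∑ s ∈ Finset.range k, ∑ t ∈ Finset.range k,
        (2 * t + 1) * (2 * n + 2).choose (s + 1) * (2 * n + 3).choose (n + t + 2) *
          gesselF (2 * k - 2) (2 * (t : ℤ)) ((s : ℤ) + t) := by
  classical
  set m1 := 2 * k - 2 with hm1
  set Φ : ℤ × ℤ → ℕ :=
    fun q => GE.Wq m1 (0, 0) q * ((2 * n + 3) * GE.Wq (2 * n + 2) q (0, (n : ℤ))) with hPhi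
  set S1 : Finset (ℤ × ℤ) := (Finset.range k ×ˢ Finset.range k).image
    (fun ts : ℕ × ℕ => (2 * (ts.2 : ℤ), (ts.1 : ℤ) + ts.2)) with hS1
  set S2 : Finset (ℤ × ℤ) := (Finset.range (k - 1)).image
    (fun t : ℕ => (2 * (t : ℤ) + 2, (t : ℤ))) with hS2
  have key1 : (2 * n + 3) * gesselF (2 * n + 2 * k) 0 (n : ℤ) = ∑ q ∈ GE.box m1, Φ q := by
    rw [GE.gesselF_eq_Wq, show 2 * n + 2 * k = m1 + (2 * n + 2) by omega, GE.Wq_concat,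
      Finset.mul_sum]
    exact Finset.sum_congr rfl fun q _ => by simp only [hPhi]; ring
  have hvan : ∀ q ∈ GE.box m1, q ∉ S1 ∪ S2 → Φ q = 0 := by
    intro q _ hq
    by_contra hΦ
    simp only [hPhi] at hΦ
    have h1 : GE.Wq m1 (0, 0) q ≠ 0 := fun h => hΦ (by rw [h, zero_mul])
    have h2 : GE.Wq (2 * n + 2) q (0, (n : ℤ)) ≠ 0 := fun h => hΦ (by rw [h, mul_zero, mul_zero])
    have f1 := GE.Wq_facts h1
    have f2 := GE.Wq_facts h2
    dsimp only at f1 f2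
    obtain ⟨hq1, hq2, hbb1, hbb2, hbb3, hbb4, hpar1, hineq1⟩ := f1
    obtain ⟨hw1, hw2, hwb1, hwb2, hwb3, hwb4, hpar2, hineq2⟩ := f2
    obtain ⟨t, ht⟩ : ∃ t : ℕ, q.1 = 2 * (t : ℤ) := ⟨q.1.toNat / 2, by omega⟩
    rcases le_or_gt (t : ℤ) q.2 with hyt | hyt
    · obtain ⟨s, hs⟩ : ∃ s : ℕ, q.2 = (s : ℤ) + t := ⟨(q.2 - t).toNat, by omega⟩
      refine hq (Finset.mem_union_left _ (Finset.mem_image.2 ⟨(s, t), ?_, ?_⟩))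
      · rw [Finset.mem_product, Finset.mem_range, Finset.mem_range]
        constructor <;> omega
      · rw [Prod.ext_iff]
        constructor <;> dsimp only <;> omega
    · obtain ⟨t1, ht1⟩ : ∃ t1 : ℕ, t = t1 + 1 := ⟨t - 1, by omega⟩
      refine hq (Finset.mem_union_right _ (Finset.mem_image.2 ⟨t1, Finset.mem_range.2 (by omega), ?_⟩))
      rw [Prod.ext_iff]
      constructor <;> dsimp only <;> omega
  have hsub : S1 ∪ S2 ⊆ GE.box m1 := by
    intro q hq
    simp only [hS1, hS2, Finset.mem_union, Finset.mem_image, Finset.mem_product,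
      Finset.mem_range] at hq
    simp only [GE.box, Finset.mem_product, Finset.mem_Icc]
    rcases hq with ⟨⟨s, t⟩, ⟨hs, ht⟩, rfl⟩ | ⟨t, ht, rfl⟩
    · refine ⟨⟨?_, ?_⟩, ?_, ?_⟩ <;> dsimp only <;> omega
    · refine ⟨⟨?_, ?_⟩, ?_, ?_⟩ <;> dsimp only <;> omega
  have hdisj : Disjoint S1 S2 := by
    rw [Finset.disjoint_left]
    rintro q hq1 hq2
    simp only [hS1, hS2, Finset.mem_image, Finset.mem_product, Finset.mem_range] at hq1 hq2
    obtain ⟨⟨s, t⟩, -, rfl⟩ := hq1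
    obtain ⟨t', -, he⟩ := hq2
    rw [Prod.ext_iff] at he
    dsimp only at he
    obtain ⟨he1, he2⟩ := he
    omega
  have hsplit : ∑ q ∈ GE.box m1, Φ q = (∑ q ∈ S1, Φ q) + ∑ q ∈ S2, Φ q := by
    rw [← Finset.sum_union hdisj]
    exact (Finset.sum_subset hsub hvan).symm
  have hS1sum : ∑ q ∈ S1, Φ q =
      ∑ s ∈ Finset.range k, ∑ t ∈ Finset.range k,
        (2 * t + 1) * (2 * n + 2).choose (s + 1) * (2 * n + 3).choose (n + t + 2) *
          gesselF m1 (2 * (t : ℤ)) ((s : ℤ) + t) := by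
    rw [hS1, Finset.sum_image ?inj1]
    case inj1 =>
      rintro ⟨s, t⟩ - ⟨s', t'⟩ - he
      rw [Prod.ext_iff] at he
      dsimp only at he
      obtain ⟨he1, he2⟩ := he
      have h1 : t = t' := by omega
      have h2 : s = s' := by omega
      rw [h1, h2]
    rw [Finset.sum_product]
    refine Finset.sum_congr rfl fun s _ => Finset.sum_congr rfl fun t _ => ?_
    simp only [hPhi]
    have hA := GE.lemA n t (s + t) (by omega)
    rw [show ((s + t : ℕ) : ℤ) = (s : ℤ) + t by push_cast; ring] at hA
    rw [show (s + t) + 1 - t = s + 1 by omega] at hA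
    rw [GE.gesselF_eq_Wq m1 (2 * (t : ℤ)) ((s : ℤ) + t), hA]
    ring
  have hS2sum : ∑ q ∈ S2, Φ q =
      ∑ t ∈ Finset.range (k - 1),
        (2 * t + 3) * (2 * n + 3).choose (n + t + 3) *
          gesselF m1 (2 * (t : ℤ) + 2) (t : ℤ) := by
    rw [hS2, Finset.sum_image ?inj2]
    case inj2 =>
      intro t ht0 t' ht0' he
      rw [Prod.ext_iff] at he
      dsimp only at he
      obtain ⟨he1, he2⟩ := he
      omega
    refine Finset.sum_congr rfl fun t _ => ?_
    simp only [hPhi]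
    have hA := GE.lemA n (t + 1) t (by omega)
    rw [show (2 * ((t + 1 : ℕ) : ℤ)) = 2 * (t : ℤ) + 2 by push_cast; ring] at hA
    rw [show t + 1 - (t + 1) = 0 by omega, Nat.choose_zero_right] at hA
    rw [show n + (t + 1) + 2 = n + t + 3 by ring] at hA
    rw [show 2 * (t + 1) + 1 = 2 * t + 3 by ring] at hA
    rw [GE.gesselF_eq_Wq m1 (2 * (t : ℤ) + 2) (t : ℤ), hA]
    ring
  rw [key1, hsplit, hS1sum, hS2sum, add_comm]
end

section
/- For all n ≥ 1, k ≥ 1 and r ≤ n+k with r ≥ k - n - 2, F(n+k+r; n+k-r, n) = Σ_{t=0}^{k-2} [C(n-k+r+2, n-t) - C(n-k+r+2, n+t+3)] · F(2k-2; 2t+2, t) + Σ_{s=0}^{k-1} Σ_{t=0}^{k-1} C(n-k+r+2, s+1) · [C(n-k+r+2, n-t+1) - C(n-k+r+2, n+t+2)] · F(2k-2; 2t, s+t). -/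
open Finset

/-- Binomial coefficient with integer lower index, 0 when it is negative. -/
def chooseZ (n : ℕ) (k : ℤ) : ℕ := if 0 ≤ k then n.choose k.toNat else 0

/-- halved binomial: C(M, j/2), zero unless j is even and 0 ≤ j. -/
def C2 (M : ℕ) (j : ℤ) : ℕ := if 0 ≤ j ∧ 2 ∣ j then M.choose (j / 2).toNat else 0

lemma C2_neg {M : ℕ} {j : ℤ} (h : j < 0) : C2 M j = 0 := by
  simp [C2]; intro h'; omega

lemma C2_odd {M : ℕ} {j : ℤ} (h : ¬ (2 ∣ j)) : C2 M j = 0 := by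
  simp [C2]; intro _ h'; exact absurd h' h

lemma C2_two_mul (M : ℕ) (j : ℤ) : C2 M (2 * j) = chooseZ M j := by
  unfold C2 chooseZ
  rcases le_or_gt 0 j with h | h
  · rw [if_pos ⟨by omega, ⟨j, rfl⟩⟩, if_pos h, Int.mul_ediv_cancel_left _ (by norm_num)]
  · rw [if_neg (by omega), if_neg (by omega)]

lemma C2_big {M : ℕ} {j : ℤ} (h : 2 * M < j) : C2 M j = 0 := by
  unfold C2
  split
  · next hc =>
    apply Nat.choose_eq_zero_of_lt
    omega
  · rfl

lemma C2_pascal (M : ℕ) (j : ℤ) : C2 (M + 1) j = C2 M j + C2 M (j - 2) := by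
  rcases Int.even_or_odd j with ⟨i, hi⟩ | ⟨i, hi⟩
  · -- j = 2i
    subst hi
    rcases lt_trichotomy i 0 with h | rfl | h
    · rw [C2_neg (by omega), C2_neg (by omega), C2_neg (by omega)]
    · norm_num [C2]
    · have h1 : i + i = 2 * i := by ring
      have h2 : i + i - 2 = 2 * (i - 1) := by ring
      rw [h2, h1, C2_two_mul, C2_two_mul, C2_two_mul]
      unfold chooseZ
      rw [if_pos (by omega), if_pos (by omega), if_pos (by omega)]
      have h3 : i.toNat = (i - 1).toNat + 1 := by omega
      rw [h3, Nat.choose_succ_succ']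
      omega
  · rw [C2_odd (by omega), C2_odd (by omega), C2_odd (by omega)]

lemma C2_symm_aux (M : ℕ) (j : ℤ) (h : 0 ≤ j) : C2 M ((M : ℤ) - j) = C2 M ((M : ℤ) + j) := by
  by_cases hd : (2 : ℤ) ∣ (M : ℤ) - j
  · rcases le_or_gt 0 ((M : ℤ) - j) with h0 | h0
    · obtain ⟨c, hc⟩ := hd
      obtain ⟨a, ha⟩ : ∃ a : ℕ, (M : ℤ) - j = 2 * (a : ℤ) := ⟨c.toNat, by omega⟩
      obtain ⟨b, hb⟩ : ∃ b : ℕ, (M : ℤ) + j = 2 * (b : ℤ) := ⟨(c + j).toNat, by omega⟩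
      rw [ha, hb, C2_two_mul, C2_two_mul]
      unfold chooseZ
      rw [if_pos (by positivity), if_pos (by positivity)]
      simp only [Int.toNat_natCast]
      rw [show b = M - a by omega, Nat.choose_symm (by omega)]
    · rw [C2_neg h0, C2_big (by omega)]
  · rw [C2_odd hd, C2_odd (by intro h'; apply hd; omega)]

lemma C2_symm (M : ℕ) (j : ℤ) : C2 M ((M : ℤ) - j) = C2 M ((M : ℤ) + j) := by
  rcases le_or_gt 0 j with h | h
  · exact C2_symm_aux M j h
  · rw [show (M : ℤ) - j = (M : ℤ) + (-j) by ring, show (M : ℤ) + j = (M : ℤ) - (-j) by ring]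
    exact (C2_symm_aux M (-j) (by omega)).symm

/-- The conjectured continuation-count: free v-factor times reflected x-ballot factor. -/
def Phi (M : ℕ) (p q X Y : ℤ) : ℤ :=
  (C2 M ((M : ℤ) + X + 2 * q - p - 2 * Y) : ℤ) *
    ((C2 M ((M : ℤ) + X - p) : ℤ) - (C2 M ((M : ℤ) + X + p + 2) : ℤ))

lemma C2_zero_left {j : ℤ} (h : j ≠ 0) : C2 0 j = 0 := by
  unfold C2
  split
  · next hc => exact Nat.choose_eq_zero_of_lt (by omega)
  · rfl

lemma C2_zero_zero : C2 0 0 = 1 := by norm_num [C2]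

lemma pas4 (M : ℕ) (D b1 b2 : ℤ) :
    (C2 (M + 1) D : ℤ) * ((C2 (M + 1) b1 : ℤ) - (C2 (M + 1) b2 : ℤ)) =
      (C2 M D : ℤ) * ((C2 M b1 : ℤ) - (C2 M b2 : ℤ))
    + (C2 M (D - 2) : ℤ) * ((C2 M (b1 - 2) : ℤ) - (C2 M (b2 - 2) : ℤ))
    + (C2 M D : ℤ) * ((C2 M (b1 - 2) : ℤ) - (C2 M (b2 - 2) : ℤ))
    + (C2 M (D - 2) : ℤ) * ((C2 M b1 : ℤ) - (C2 M b2 : ℤ)) := by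
  have P : ∀ j : ℤ, (C2 (M + 1) j : ℤ) = (C2 M j : ℤ) + (C2 M (j - 2) : ℤ) := by
    intro j; exact_mod_cast C2_pascal M j
  rw [P, P, P]; ring

lemma phi_cong (N : ℕ) (j j' b b' c c' : ℤ) (h1 : j = j') (h2 : b = b') (h3 : c = c') :
    (C2 N j : ℤ) * ((C2 N b : ℤ) - (C2 N c : ℤ)) =
      (C2 N j' : ℤ) * ((C2 N b' : ℤ) - (C2 N c' : ℤ)) := by
  rw [h1, h2, h3]

lemma phi_rec (M : ℕ) (p q X Y : ℤ) :
    Phi (M + 1) p q X Y = ∑ c : Fin 4, Phi M p q (X - (gstep c).1) (Y - (gstep c).2) := by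
  have e0 : Phi M p q (X - (gstep 0).1) (Y - (gstep 0).2)
      = (C2 M ((M:ℤ) + 1 + X + 2*q - p - 2*Y) : ℤ) *
        ((C2 M ((M:ℤ) + 1 + X - p) : ℤ) - (C2 M ((M:ℤ) + 1 + X + p + 2) : ℤ)) := by
    show Phi M p q (X - (-1)) (Y - 0) = _
    exact phi_cong _ _ _ _ _ _ _ (by ring) (by ring) (by ring)
  have e1 : Phi M p q (X - (gstep 1).1) (Y - (gstep 1).2)
      = (C2 M ((M:ℤ) + 1 + X + 2*q - p - 2*Y - 2) : ℤ) *
        ((C2 M ((M:ℤ) + 1 + X - p - 2) : ℤ) - (C2 M ((M:ℤ) + 1 + X + p + 2 - 2) : ℤ)) := by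
    show Phi M p q (X - 1) (Y - 0) = _
    exact phi_cong _ _ _ _ _ _ _ (by ring) (by ring) (by ring)
  have e2 : Phi M p q (X - (gstep 2).1) (Y - (gstep 2).2)
      = (C2 M ((M:ℤ) + 1 + X + 2*q - p - 2*Y) : ℤ) *
        ((C2 M ((M:ℤ) + 1 + X - p - 2) : ℤ) - (C2 M ((M:ℤ) + 1 + X + p + 2 - 2) : ℤ)) := by
    show Phi M p q (X - 1) (Y - 1) = _
    exact phi_cong _ _ _ _ _ _ _ (by ring) (by ring) (by ring)
  have e3 : Phi M p q (X - (gstep 3).1) (Y - (gstep 3).2)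
      = (C2 M ((M:ℤ) + 1 + X + 2*q - p - 2*Y - 2) : ℤ) *
        ((C2 M ((M:ℤ) + 1 + X - p) : ℤ) - (C2 M ((M:ℤ) + 1 + X + p + 2) : ℤ)) := by
    show Phi M p q (X - (-1)) (Y - (-1)) = _
    exact phi_cong _ _ _ _ _ _ _ (by ring) (by ring) (by ring)
  have eL : Phi (M + 1) p q X Y
      = (C2 (M + 1) ((M:ℤ) + 1 + X + 2*q - p - 2*Y) : ℤ) *
        ((C2 (M + 1) ((M:ℤ) + 1 + X - p) : ℤ) - (C2 (M + 1) ((M:ℤ) + 1 + X + p + 2) : ℤ)) := by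
    unfold Phi
    exact phi_cong _ _ _ _ _ _ _ (by push_cast; ring) (by push_cast; ring) (by push_cast; ring)
  rw [Fin.sum_univ_four, e0, e1, e2, e3, eL, pas4]

lemma phi_Xneg (M : ℕ) (p q Y : ℤ) : Phi M p q (-1) Y = 0 := by
  unfold Phi
  rw [show (M:ℤ) + (-1) - p = (M:ℤ) - (p + 1) by ring,
    show (M:ℤ) + (-1) + p + 2 = (M:ℤ) + (p + 1) by ring, C2_symm, sub_self, mul_zero]

lemma phi_Yneg (p q : ℤ) (hp : 0 ≤ p) (hq : 0 ≤ q) : Phi 0 p q 0 (-1) = 0 := by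
  unfold Phi
  rcases eq_or_lt_of_le hp with h | h
  · rw [show ((0:ℕ):ℤ) + 0 + 2*q - p - 2*(-1) = 2*q + 2 by omega,
      C2_zero_left (j := 2*q + 2) (by omega)]
    norm_num
  · rw [show ((0:ℕ):ℤ) + 0 - p = -p by ring, C2_zero_left (j := -p) (by omega),
      C2_zero_left (j := ((0:ℕ):ℤ) + 0 + p + 2) (by omega)]
    norm_num

lemma phi_base (p q X Y : ℤ) (hX : 0 ≤ X) (hp : 0 ≤ p) :
    Phi 0 p q X Y = if p = X ∧ q = Y then 1 else 0 := by
  unfold Phi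
  rw [C2_zero_left (j := ((0:ℕ):ℤ) + X + p + 2) (by omega)]
  by_cases h : p = X ∧ q = Y
  · obtain ⟨rfl, rfl⟩ := h
    rw [if_pos ⟨rfl, rfl⟩, show ((0:ℕ):ℤ) + p + 2*q - p - 2*q = 0 by ring,
      show ((0:ℕ):ℤ) + p - p = 0 by ring, C2_zero_zero]
    norm_num
  · rw [if_neg h]
    by_cases hpX : p = X
    · subst hpX
      have hq : q ≠ Y := by tauto
      rw [show ((0:ℕ):ℤ) + p + 2*q - p - 2*Y = 2*q - 2*Y by ring,
        C2_zero_left (j := 2*q - 2*Y) (by omega)]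
      norm_num
    · rw [show ((0:ℕ):ℤ) + X - p = X - p by ring, C2_zero_left (j := X - p) (by omega)]
      norm_num

/-- Number of quadrant walks of length `M` from `(p,q)` to `(X,Y)`. -/
noncomputable def NW (M : ℕ) (p q X Y : ℤ) : ℕ :=
  Nat.card {w : Fin M → Fin 4 //
    (∀ j, 1 ≤ j → j ≤ M → 0 ≤ p + (wpos M w j).1 ∧ 0 ≤ q + (wpos M w j).2) ∧
    p + (wpos M w M).1 = X ∧ q + (wpos M w M).2 = Y}

lemma gesselF_eq_NW (m : ℕ) (X Y : ℤ) : gesselF m X Y = NW m 0 0 X Y := by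
  apply Nat.card_congr
  apply Equiv.subtypeEquivRight
  intro w
  rw [Prod.ext_iff]
  simp only [zero_add]

lemma wpos_init (M : ℕ) (w : Fin (M + 1) → Fin 4) (j : ℕ) (hj : j ≤ M) :
    wpos (M + 1) w j = wpos M (Fin.init w) j := by
  unfold wpos
  rw [Fin.sum_univ_castSucc, if_neg (by simp only [Fin.val_last]; omega), add_zero]
  exact Finset.sum_congr rfl fun i _ => by simp [Fin.init]

lemma wpos_last (M : ℕ) (w : Fin (M + 1) → Fin 4) :
    wpos (M + 1) w (M + 1) = wpos M (Fin.init w) M + gstep (w (Fin.last M)) := by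
  unfold wpos
  rw [Fin.sum_univ_castSucc, if_pos (by simp only [Fin.val_last]; omega)]
  congr 1
  exact Finset.sum_congr rfl fun i _ => by
    rw [if_pos (by have := i.isLt; simp only [Fin.coe_castSucc]; omega), if_pos i.isLt]
    simp [Fin.init]

lemma nat_card_sigma_s17 (T : Fin 4 → Type) [∀ c, Finite (T c)] :
    Nat.card ((c : Fin 4) × T c) = ∑ c, Nat.card (T c) := by
  letI : ∀ c, Fintype (T c) := fun c => Fintype.ofFinite _
  simp only [Nat.card_eq_fintype_card, Fintype.card_sigma]

lemma NW_succ (M : ℕ) (p q X Y : ℤ) (hX : 0 ≤ X) (hY : 0 ≤ Y) :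
    NW (M + 1) p q X Y = ∑ c : Fin 4, NW M p q (X - (gstep c).1) (Y - (gstep c).2) := by
  have hiff : ∀ w : Fin (M + 1) → Fin 4,
      ((∀ j, 1 ≤ j → j ≤ M + 1 →
          0 ≤ p + (wpos (M+1) w j).1 ∧ 0 ≤ q + (wpos (M+1) w j).2) ∧
        p + (wpos (M+1) w (M+1)).1 = X ∧ q + (wpos (M+1) w (M+1)).2 = Y)
      ↔ ((fun (x : Fin 4 × (Fin M → Fin 4)) =>
          (∀ j, 1 ≤ j → j ≤ M →
            0 ≤ p + (wpos M x.2 j).1 ∧ 0 ≤ q + (wpos M x.2 j).2) ∧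
          p + (wpos M x.2 M).1 = X - (gstep x.1).1 ∧
          q + (wpos M x.2 M).2 = Y - (gstep x.1).2)
          ((Fin.snocEquiv (fun _ => Fin 4)).symm w)) := by
    intro w
    simp only [Fin.snocEquiv_symm_apply]
    have hl1 : (wpos (M+1) w (M+1)).1
        = (wpos M (Fin.init w) M).1 + (gstep (w (Fin.last M))).1 := by rw [wpos_last]; rfl
    have hl2 : (wpos (M+1) w (M+1)).2
        = (wpos M (Fin.init w) M).2 + (gstep (w (Fin.last M))).2 := by rw [wpos_last]; rfl
    constructor
    · rintro ⟨hcon, hx, hy⟩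
      refine ⟨fun j h1 h2 => ?_, by omega, by omega⟩
      rw [← wpos_init M w j h2]
      exact hcon j h1 (by omega)
    · rintro ⟨hcon, hx, hy⟩
      refine ⟨fun j h1 h2 => ?_, by omega, by omega⟩
      rcases Nat.lt_or_ge j (M + 1) with h | h
      · rw [wpos_init M w j (by omega)]
        exact hcon j h1 (by omega)
      · have hj : j = M + 1 := by omega
        subst hj
        constructor <;> omega
  unfold NW
  rw [Nat.card_congr ((Equiv.subtypeEquiv ((Fin.snocEquiv (fun _ => Fin 4)).symm) hiff).trans
    (Equiv.subtypeProdEquivSigmaSubtype (fun (c : Fin 4) (w' : Fin M → Fin 4) =>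
      (∀ j, 1 ≤ j → j ≤ M →
        0 ≤ p + (wpos M w' j).1 ∧ 0 ≤ q + (wpos M w' j).2) ∧
      p + (wpos M w' M).1 = X - (gstep c).1 ∧
      q + (wpos M w' M).2 = Y - (gstep c).2)))]
  exact nat_card_sigma_s17 _

lemma NW_zero (p q X Y : ℤ) : NW 0 p q X Y = if p = X ∧ q = Y then 1 else 0 := by
  have h1 : ∀ (w : Fin 0 → Fin 4) (j : ℕ), wpos 0 w j = 0 := by
    intro w j; simp [wpos]
  unfold NW
  rw [Nat.card_congr (Equiv.subtypeEquivRight (q := fun _ => p = X ∧ q = Y)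
    (by intro w; simp [h1]; intros; omega))]
  by_cases h : p = X ∧ q = Y
  · rw [if_pos h, Nat.card_congr (Equiv.subtypeUnivEquiv (fun _ => h))]
    simp [Nat.card_unique]
  · rw [if_neg h, Nat.card_eq_zero]
    left
    exact ⟨fun x => h x.2⟩

lemma NW_out (M : ℕ) (p q X Y : ℤ) (h : X < 0 ∨ Y < 0) (hp : 0 ≤ p) (hq : 0 ≤ q) :
    NW M p q X Y = 0 := by
  cases M with
  | zero => rw [NW_zero, if_neg (by omega)]
  | succ M' =>
    unfold NW
    rw [Nat.card_eq_zero]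
    left
    refine ⟨?_⟩
    rintro ⟨w, hcon, hx, hy⟩
    have := hcon (M' + 1) (by omega) le_rfl
    omega

lemma gstep_bnd : ∀ c : Fin 4, (gstep c).1 ≤ 1 ∧ (gstep c).2 ≤ 1 ∧
    2 * (gstep c).2 - (gstep c).1 ≤ 1 := by decide

lemma NW_bounds (A : ℕ) (p q : ℤ) (h : NW A 0 0 p q ≠ 0) :
    p ≤ A ∧ q ≤ A ∧ 2 * q - p ≤ A := by
  obtain ⟨⟨w, hcon, hx, hy⟩, -⟩ := Nat.card_ne_zero.mp h
  have hw : wpos A w A = ∑ i : Fin A, gstep (w i) :=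
    Finset.sum_congr rfl fun i _ => if_pos i.isLt
  have hp1 : p = ∑ i : Fin A, (gstep (w i)).1 := by
    rw [← hx, hw, zero_add, Prod.fst_sum]
  have hq1 : q = ∑ i : Fin A, (gstep (w i)).2 := by
    rw [← hy, hw, zero_add, Prod.snd_sum]
  have b1 : ∑ i : Fin A, (gstep (w i)).1 ≤ ∑ _i : Fin A, (1 : ℤ) :=
    Finset.sum_le_sum fun i _ => (gstep_bnd (w i)).1
  have b2 : ∑ i : Fin A, (gstep (w i)).2 ≤ ∑ _i : Fin A, (1 : ℤ) :=
    Finset.sum_le_sum fun i _ => (gstep_bnd (w i)).2.1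
  have b3 : ∑ i : Fin A, (2 * (gstep (w i)).2 - (gstep (w i)).1) ≤ ∑ _i : Fin A, (1 : ℤ) :=
    Finset.sum_le_sum fun i _ => (gstep_bnd (w i)).2.2
  have hc : ∑ _i : Fin A, (1 : ℤ) = A := by simp
  have h3 : 2 * q - p = ∑ i : Fin A, (2 * (gstep (w i)).2 - (gstep (w i)).1) := by
    rw [hp1, hq1, Finset.mul_sum, ← Finset.sum_sub_distrib]
  constructor
  · omega
  constructor
  · omega
  · omega

lemma gstep_bnd2 : ∀ c : Fin 4, -1 ≤ (gstep c).1 ∧ (gstep c).1 ≤ 1 ∧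
    -1 ≤ (gstep c).2 ∧ (gstep c).2 ≤ 1 ∧ 2 * (gstep c).2 - (gstep c).1 ≤ 1 := by decide

lemma main_lemma (A : ℕ) : ∀ (M : ℕ) (X Y : ℤ), 0 ≤ X → 0 ≤ Y → (M : ℤ) + X ≤ 2 * Y + 2 →
    (NW (A + M) 0 0 X Y : ℤ) =
      ∑ p ∈ Finset.range (A + 1), ∑ q ∈ Finset.range (A + 1),
        (NW A 0 0 (p : ℤ) (q : ℤ) : ℤ) * Phi M (p : ℤ) (q : ℤ) X Y := by
  intro M
  induction M with
  | zero =>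
    intro X Y hX hY _
    have hsingle : ∀ (f : ℕ → ℤ) (v : ℤ) (B : ℕ), 0 ≤ v → v ≤ (B : ℤ) →
        ∑ i ∈ Finset.range (B + 1), f i * (if (i : ℤ) = v then 1 else 0) = f v.toNat := by
      intro f v B h0 hB
      rw [Finset.sum_eq_single v.toNat]
      · rw [if_pos (by omega), mul_one]
      · intro b _ hb
        rw [if_neg (by omega), mul_zero]
      · intro hmem; exact absurd (Finset.mem_range.mpr (by omega)) hmem
    by_cases hbox : X ≤ (A : ℤ) ∧ Y ≤ (A : ℤ)
    · have hcong : ∀ p ∈ Finset.range (A + 1), ∀ q ∈ Finset.range (A + 1),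
          (NW A 0 0 (p : ℤ) (q : ℤ) : ℤ) * Phi 0 (p : ℤ) (q : ℤ) X Y
          = ((NW A 0 0 (p : ℤ) (q : ℤ) : ℤ) * (if (q : ℤ) = Y then 1 else 0))
              * (if (p : ℤ) = X then 1 else 0) := by
        intro p _ q _
        rw [phi_base _ _ _ _ hX (by positivity)]
        by_cases h1 : (p : ℤ) = X <;> by_cases h2 : (q : ℤ) = Y <;>
          simp [h1, h2]
      rw [Finset.sum_congr rfl (fun p hp => Finset.sum_congr rfl (fun q hq => hcong p hp q hq))]
      simp only [← Finset.sum_mul]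
      rw [hsingle _ X A hX hbox.1]
      rw [hsingle (fun q => (NW A 0 0 (X.toNat : ℤ) (q : ℤ) : ℤ)) Y A hY hbox.2]
      rw [Int.toNat_of_nonneg hX, Int.toNat_of_nonneg hY, Nat.add_zero]
    · have hz : NW A 0 0 X Y = 0 := by
        by_contra h
        have := NW_bounds A X Y h
        omega
      rw [Nat.add_zero, hz]
      rw [Finset.sum_eq_zero]
      · rfl
      intro p hp
      rw [Finset.sum_eq_zero]
      intro q hq
      rw [phi_base _ _ _ _ hX (by positivity), if_neg (by
        rw [Finset.mem_range] at hp hq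
        rintro ⟨rfl, rfl⟩
        omega), mul_zero]
  | succ M ih =>
    intro X Y hX hY hE
    have child : ∀ X' Y' : ℤ, -1 ≤ X' → -1 ≤ Y' → (M : ℤ) + X' ≤ 2 * Y' + 2 →
        (NW (A + M) 0 0 X' Y' : ℤ) =
          ∑ p ∈ Finset.range (A + 1), ∑ q ∈ Finset.range (A + 1),
            (NW A 0 0 (p : ℤ) (q : ℤ) : ℤ) * Phi M (p : ℤ) (q : ℤ) X' Y' := by
      intro X' Y' hX' hY' hE'
      rcases eq_or_lt_of_le hX' with h | hX0
      · -- X' = -1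
        rw [NW_out _ _ _ _ _ (Or.inl (by omega)) le_rfl le_rfl]
        rw [Finset.sum_eq_zero]
        · rfl
        intro p _
        rw [Finset.sum_eq_zero]
        intro q _
        rw [← h, phi_Xneg, mul_zero]
      rcases eq_or_lt_of_le hY' with h | hY0
      · -- Y' = -1, X' ≥ 0, hence M = 0 and X' = 0
        rw [NW_out _ _ _ _ _ (Or.inr (by omega)) le_rfl le_rfl]
        have hM0 : M = 0 ∧ X' = 0 := by
          constructor <;> omega
        obtain ⟨rfl, rfl⟩ := hM0
        rw [Finset.sum_eq_zero]
        · rfl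
        intro p hp
        rw [Finset.sum_eq_zero]
        intro q hq
        rw [← h, phi_Yneg _ _ (by positivity) (by positivity), mul_zero]
      · exact ih X' Y' (by omega) (by omega) hE'
    calc (NW (A + (M + 1)) 0 0 X Y : ℤ)
        = ∑ c : Fin 4, (NW (A + M) 0 0 (X - (gstep c).1) (Y - (gstep c).2) : ℤ) := by
          rw [show A + (M + 1) = (A + M) + 1 from rfl, NW_succ _ 0 0 X Y hX hY]
          push_cast
          rfl
      _ = ∑ c : Fin 4, ∑ p ∈ Finset.range (A + 1), ∑ q ∈ Finset.range (A + 1),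
            (NW A 0 0 (p : ℤ) (q : ℤ) : ℤ) *
              Phi M (p : ℤ) (q : ℤ) (X - (gstep c).1) (Y - (gstep c).2) := by
          refine Finset.sum_congr rfl fun c _ => ?_
          have hb := gstep_bnd2 c
          exact child _ _ (by omega) (by omega) (by push_cast at hE ⊢; omega)
      _ = ∑ p ∈ Finset.range (A + 1), ∑ q ∈ Finset.range (A + 1),
            (NW A 0 0 (p : ℤ) (q : ℤ) : ℤ) *
              ∑ c : Fin 4, Phi M (p : ℤ) (q : ℤ) (X - (gstep c).1) (Y - (gstep c).2) := by
          rw [Finset.sum_comm]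
          refine Finset.sum_congr rfl fun p _ => ?_
          rw [Finset.sum_comm]
          refine Finset.sum_congr rfl fun q _ => ?_
          rw [Finset.mul_sum]
      _ = ∑ p ∈ Finset.range (A + 1), ∑ q ∈ Finset.range (A + 1),
            (NW A 0 0 (p : ℤ) (q : ℤ) : ℤ) * Phi (M + 1) (p : ℤ) (q : ℤ) X Y := by
          refine Finset.sum_congr rfl fun p _ => Finset.sum_congr rfl fun q _ => ?_
          rw [phi_rec]

lemma chooseZ_neg (M : ℕ) {j : ℤ} (h : j < 0) : chooseZ M j = 0 := by
  unfold chooseZ; rw [if_neg (by omega)]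

lemma chooseZ_zero' (M : ℕ) : chooseZ M 0 = 1 := by simp [chooseZ]

lemma sum_range_even (k : ℕ) (hk : 1 ≤ k) (f : ℕ → ℤ) (hodd : ∀ p, p % 2 = 1 → f p = 0) :
    ∑ p ∈ Finset.range (2 * k - 1), f p = ∑ t ∈ Finset.range k, f (2 * t) := by
  have h1 : ∑ t ∈ Finset.range k, f (2 * t)
      = ∑ x ∈ (Finset.range k).image (fun t => 2 * t), f x :=
    (Finset.sum_image (by intro x _ y _ h; omega)).symm
  rw [h1]
  symm
  apply Finset.sum_subset
  · intro x hx
    simp only [Finset.mem_image, Finset.mem_range] at hx ⊢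
    obtain ⟨t, ht, rfl⟩ := hx
    omega
  · intro x hx hnx
    apply hodd
    simp only [Finset.mem_range] at hx
    simp only [Finset.mem_image, Finset.mem_range] at hnx
    by_contra h
    exact hnx ⟨x / 2, by omega, by omega⟩
theorem gessel_theorem3 (n k : ℕ) (r : ℤ) (hn : 1 ≤ n) (hk : 1 ≤ k)
    (hr1 : r ≤ (n : ℤ) + k) (hr2 : (k : ℤ) - n - 2 ≤ r) :
    (gesselF ((n : ℤ) + k + r).toNat ((n : ℤ) + k - r) (n : ℤ) : ℤ) =
      (∑ t ∈ Finset.range (k - 1),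
        ((chooseZ ((n : ℤ) - k + r + 2).toNat ((n : ℤ) - t) : ℤ) -
          (chooseZ ((n : ℤ) - k + r + 2).toNat ((n : ℤ) + t + 3) : ℤ)) *
          gesselF (2 * k - 2) (2 * (t : ℤ) + 2) (t : ℤ)) +
      ∑ s ∈ Finset.range k, ∑ t ∈ Finset.range k,
        (chooseZ ((n : ℤ) - k + r + 2).toNat ((s : ℤ) + 1) : ℤ) *
          ((chooseZ ((n : ℤ) - k + r + 2).toNat ((n : ℤ) - t + 1) : ℤ) -
            (chooseZ ((n : ℤ) - k + r + 2).toNat ((n : ℤ) + t + 2) : ℤ)) *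
          gesselF (2 * k - 2) (2 * (t : ℤ)) ((s : ℤ) + t) := by
  set A : ℕ := 2 * k - 2 with hA
  set M : ℕ := ((n : ℤ) - k + r + 2).toNat with hM
  set X : ℤ := (n : ℤ) + k - r with hX
  have hMZ : (M : ℤ) = (n : ℤ) - k + r + 2 := by rw [hM]; omega
  have hAZ : (A : ℤ) = 2 * (k : ℤ) - 2 := by rw [hA]; push_cast; omega
  have hAM : ((n : ℤ) + k + r).toNat = A + M := by omega
  have hXpos : (0 : ℤ) ≤ X := by omega
  have hMX : (M : ℤ) + X = 2 * (n : ℤ) + 2 := by omega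
  have key := main_lemma A M X (n : ℤ) hXpos (by positivity) (by omega)
  rw [hAM, gesselF_eq_NW, key]
  -- bridge lemmas
  have phiB : ∀ t q : ℕ, Phi M ((2 * t : ℕ) : ℤ) (q : ℤ) X (n : ℤ)
      = (chooseZ M ((q : ℤ) - t + 1) : ℤ) *
        ((chooseZ M ((n : ℤ) - t + 1) : ℤ) - (chooseZ M ((n : ℤ) + t + 2) : ℤ)) := by
    intro t q
    unfold Phi
    rw [show (M : ℤ) + X + 2 * (q : ℤ) - ((2 * t : ℕ) : ℤ) - 2 * (n : ℤ)
          = 2 * ((q : ℤ) - t + 1) by push_cast; omega,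
        show (M : ℤ) + X - ((2 * t : ℕ) : ℤ) = 2 * ((n : ℤ) - t + 1) by push_cast; omega,
        show (M : ℤ) + X + ((2 * t : ℕ) : ℤ) + 2 = 2 * ((n : ℤ) + t + 2) by push_cast; omega,
        C2_two_mul, C2_two_mul, C2_two_mul]
  have hNW0 : ∀ p q : ℕ, ((A : ℤ) < p ∨ (A : ℤ) < q ∨ (A : ℤ) < 2 * (q : ℤ) - p) →
      (NW A 0 0 (p : ℤ) (q : ℤ) : ℤ) = 0 := by
    intro p q h
    have : NW A 0 0 (p : ℤ) (q : ℤ) = 0 := by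
      by_contra hc
      have := NW_bounds A (p : ℤ) (q : ℤ) hc
      omega
    exact_mod_cast congrArg (Nat.cast : ℕ → ℤ) this
  -- Step 1 : keep only even p = 2t
  have step1 : ∑ p ∈ Finset.range (A + 1), ∑ q ∈ Finset.range (A + 1),
        (NW A 0 0 (p : ℤ) (q : ℤ) : ℤ) * Phi M (p : ℤ) (q : ℤ) X (n : ℤ)
      = ∑ t ∈ Finset.range k, ∑ q ∈ Finset.range (A + 1),
        (NW A 0 0 ((2 * t : ℕ) : ℤ) (q : ℤ) : ℤ) *
          Phi M ((2 * t : ℕ) : ℤ) (q : ℤ) X (n : ℤ) := by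
    rw [show A + 1 = 2 * k - 1 by omega]
    apply sum_range_even k hk
    intro p hp
    apply Finset.sum_eq_zero
    intro q _
    unfold Phi
    rw [C2_odd (j := (M : ℤ) + X + 2 * (q : ℤ) - (p : ℤ) - 2 * (n : ℤ))
      (by push_cast; omega)]
    push_cast
    ring
  rw [step1]
  -- Step 2 : extend the q-range to range (3k)
  have step2 : ∀ t : ℕ, ∑ q ∈ Finset.range (A + 1),
        (NW A 0 0 ((2 * t : ℕ) : ℤ) (q : ℤ) : ℤ) *
          Phi M ((2 * t : ℕ) : ℤ) (q : ℤ) X (n : ℤ)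
      = ∑ q ∈ Finset.range (3 * k),
        (NW A 0 0 ((2 * t : ℕ) : ℤ) (q : ℤ) : ℤ) *
          Phi M ((2 * t : ℕ) : ℤ) (q : ℤ) X (n : ℤ) := by
    intro t
    apply Finset.sum_subset
    · intro q hq
      simp only [Finset.mem_range] at hq ⊢
      omega
    · intro q hq hnq
      simp only [Finset.mem_range] at hq hnq
      rw [hNW0 _ _ (by push_cast; omega), zero_mul]
  -- Step 3 : collapse the q-sum to q = t-1 and q = t+s
  have step3 : ∀ t : ℕ, t < k → ∑ q ∈ Finset.range (3 * k),
        (NW A 0 0 ((2 * t : ℕ) : ℤ) (q : ℤ) : ℤ) *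
          Phi M ((2 * t : ℕ) : ℤ) (q : ℤ) X (n : ℤ)
      = (if 1 ≤ t then
          (NW A 0 0 ((2 * t : ℕ) : ℤ) ((t - 1 : ℕ) : ℤ) : ℤ) *
            Phi M ((2 * t : ℕ) : ℤ) ((t - 1 : ℕ) : ℤ) X (n : ℤ) else 0)
        + ∑ s ∈ Finset.range k,
          (NW A 0 0 ((2 * t : ℕ) : ℤ) ((t + s : ℕ) : ℤ) : ℤ) *
            Phi M ((2 * t : ℕ) : ℤ) ((t + s : ℕ) : ℤ) X (n : ℤ) := by
    intro t ht
    have hIco : ∑ q ∈ Finset.range (3 * k),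
          (NW A 0 0 ((2 * t : ℕ) : ℤ) (q : ℤ) : ℤ) *
            Phi M ((2 * t : ℕ) : ℤ) (q : ℤ) X (n : ℤ)
        = ∑ q ∈ Finset.Ico (t - 1) (t + k),
          (NW A 0 0 ((2 * t : ℕ) : ℤ) (q : ℤ) : ℤ) *
            Phi M ((2 * t : ℕ) : ℤ) (q : ℤ) X (n : ℤ) := by
      symm
      apply Finset.sum_subset
      · intro q hq
        simp only [Finset.mem_Ico] at hq
        simp only [Finset.mem_range]
        omega
      · intro q hq hnq
        simp only [Finset.mem_range] at hq
        simp only [Finset.mem_Ico, not_and, not_lt] at hnq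
        rcases Nat.lt_or_ge q (t - 1) with h | h
        · rw [phiB, chooseZ_neg M (by push_cast; omega)]
          push_cast
          ring
        · rw [hNW0 _ _ (by push_cast; omega), zero_mul]
    rw [hIco]
    have hrange : ∀ t0 : ℕ, ∑ q ∈ Finset.Ico t0 (t0 + k),
          (NW A 0 0 ((2 * t : ℕ) : ℤ) (q : ℤ) : ℤ) *
            Phi M ((2 * t : ℕ) : ℤ) (q : ℤ) X (n : ℤ)
        = ∑ s ∈ Finset.range k,
          (NW A 0 0 ((2 * t : ℕ) : ℤ) ((t0 + s : ℕ) : ℤ) : ℤ) *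
            Phi M ((2 * t : ℕ) : ℤ) ((t0 + s : ℕ) : ℤ) X (n : ℤ) := by
      intro t0
      rw [Finset.sum_Ico_eq_sum_range]
      rw [show t0 + k - t0 = k by omega]
    cases t with
    | zero =>
      rw [if_neg (by omega)]
      simpa using hrange 0
    | succ t' =>
      rw [if_pos (by omega)]
      rw [Finset.sum_eq_sum_Ico_succ_bot (show t' + 1 - 1 < t' + 1 + k by omega)]
      congr 1
      exact hrange (t' + 1)
  rw [Finset.sum_congr rfl (fun t ht => (step2 t).trans (step3 t (Finset.mem_range.mp ht)))]
  rw [Finset.sum_add_distrib]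
  congr 1
  · -- first sums match
    rw [show k = (k - 1) + 1 by omega, Finset.sum_range_succ']
    rw [if_neg (by omega), add_zero]
    apply Finset.sum_congr rfl
    intro i hi
    rw [if_pos (by omega)]
    rw [show i + 1 - 1 = i from rfl]
    rw [phiB (i + 1) i]
    rw [show ((i : ℤ)) - (i + 1 : ℕ) + 1 = 0 by push_cast; ring, chooseZ_zero']
    rw [show ((n : ℤ)) - (i + 1 : ℕ) + 1 = (n : ℤ) - i by push_cast; ring,
        show ((n : ℤ)) + (i + 1 : ℕ) + 2 = (n : ℤ) + i + 3 by push_cast; ring]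
    rw [← gesselF_eq_NW]
    rw [show ((2 * (i + 1) : ℕ) : ℤ) = 2 * (i : ℤ) + 2 by push_cast; ring]
    push_cast
    ring
  · -- double sums match
    rw [Finset.sum_comm]
    apply Finset.sum_congr rfl
    intro s _
    apply Finset.sum_congr rfl
    intro t _
    rw [phiB t (t + s)]
    rw [show ((t + s : ℕ) : ℤ) - t + 1 = (s : ℤ) + 1 by push_cast; ring]
    rw [← gesselF_eq_NW]
    rw [show ((2 * t : ℕ) : ℤ) = 2 * (t : ℤ) by push_cast; ring,
        show ((t + s : ℕ) : ℤ) = (s : ℤ) + t by push_cast; ring]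
    ring
end
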